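/- arXiv:1701.06050 — 2 statements merged into one kernel-verified Lean document; each statement's English description precedes it below -/
import Mathlib

section
/- Under the standing hypotheses, |X_{14}| ≤ 2ℓ−4 and consequently |X_1| ≤ 10ℓ−17, where |X_{11}| ≥ |X_{12}| ≥ … ≥ |X_{15}| is the decreasing ordering of the sizes of the five cliques X_{1i}. -/
/-- `F` is contained in `G` as a subgraph: an injective graph homomorphism exists. -/
def Contains {α : Type} {β : Type} (F : SimpleGraph α) (G : SimpleGraph β) : Prop :=
  ∃ f : α → β, Function.Injective f ∧ ∀ a b, F.Adj a b → G.Adj (f a) (f b)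

/-- The fan graph `F_ℓ`: the join of `K_1` (the vertex `none`) and `ℓ K_2`. -/
def fan (ℓ : ℕ) : SimpleGraph (Option (Fin ℓ × Fin 2)) :=
  SimpleGraph.fromRel (fun x y =>
    x = none ∨ y = none ∨ ∃ i a b, x = some (i, a) ∧ y = some (i, b))

/-- The matching `ℓ K_2`: `ℓ` disjoint edges. -/
def matchingGraph (ℓ : ℕ) : SimpleGraph (Fin ℓ × Fin 2) :=
  SimpleGraph.fromRel (fun x y => x.1 = y.1)

/-- Vertices outside `U = range u` having exactly `s` neighbours in `U`. -/
def XS {V : Type} [Fintype V] [DecidableEq V] (G : SimpleGraph V) [DecidableRel G.Adj]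
    (u : Fin 5 → V) (s : ℕ) : Finset V :=
  Finset.univ.filter fun v =>
    (∀ j, v ≠ u j) ∧ (Finset.univ.filter fun j => G.Adj v (u j)).card = s

/-- Vertices outside `U` with exactly `s` neighbours in `U`, one of which is `u i`. -/
def XSi {V : Type} [Fintype V] [DecidableEq V] (G : SimpleGraph V) [DecidableRel G.Adj]
    (u : Fin 5 → V) (s : ℕ) (i : Fin 5) : Finset V :=
  (XS G u s).filter fun v => G.Adj v (u i)

namespace FanAux
variable {V : Type} [Fintype V] [DecidableEq V] (G : SimpleGraph V) [DecidableRel G.Adj]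

/-- a `k`-matching in the neighbourhood of `c`, supported in `S`. -/
def Good (c : V) (S : Finset V) (k : ℕ) (e : Fin k → V × V) : Prop :=
  (∀ t, G.Adj c (e t).1 ∧ G.Adj c (e t).2 ∧ G.Adj (e t).1 (e t).2 ∧
      (e t).1 ∈ S ∧ (e t).2 ∈ S)
  ∧ Function.Injective (fun p : Fin k × Fin 2 => if p.2 = 0 then (e p.1).1 else (e p.1).2)

lemma good_of_clique (c : V) (S : Finset V) (hS : G.IsClique (↑S : Set V))
    (hadj : ∀ x ∈ S, G.Adj c x) (k : ℕ) (hk : 2 * k ≤ S.card) :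
    ∃ e, Good G c S k e := by
  classical
  set F : Fin (2*k) → V := fun i => (S.equivFin.symm (Fin.castLE hk i) : V) with hF
  have hFinj : Function.Injective F := by
    intro a b h
    have := Subtype.coe_injective h
    have := S.equivFin.symm.injective this
    exact Fin.castLE_injective hk this
  have hFS : ∀ i, F i ∈ S := fun i => (S.equivFin.symm (Fin.castLE hk i)).2
  refine ⟨fun t => (F ⟨2*t.1, by have := t.2; omega⟩, F ⟨2*t.1+1, by have := t.2; omega⟩),
    ?_, ?_⟩
  · intro t
    refine ⟨hadj _ (hFS _), hadj _ (hFS _), ?_, hFS _, hFS _⟩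
    refine hS (hFS _) (hFS _) ?_
    intro h
    have := hFinj h
    simp [Fin.ext_iff] at this
  · rintro ⟨t, r⟩ ⟨t', r'⟩ h
    dsimp at h
    fin_cases r <;> fin_cases r' <;> simp at h <;>
      (first
        | (have := hFinj h; simp [Fin.ext_iff] at this; simp [Prod.ext_iff, Fin.ext_iff]; omega)
        | (have := hFinj h; simp [Fin.ext_iff] at this; omega))

lemma good_union {c : V} {S1 S2 : Finset V} {k1 k2 : ℕ} {e1 e2}
    (h1 : Good G c S1 k1 e1) (h2 : Good G c S2 k2 e2) (hd : Disjoint S1 S2) :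
    ∃ e, Good G c (S1 ∪ S2) (k1 + k2) e := by
  classical
  refine ⟨fun t => if h : (t : ℕ) < k1 then e1 ⟨t, h⟩ else
    e2 ⟨(t : ℕ) - k1, by have := t.2; omega⟩, ?_, ?_⟩
  · intro t
    dsimp only
    split
    · obtain ⟨a1, a2, a3, a4, a5⟩ := h1.1 _
      exact ⟨a1, a2, a3, Finset.mem_union_left _ a4, Finset.mem_union_left _ a5⟩
    · obtain ⟨a1, a2, a3, a4, a5⟩ := h2.1 _
      exact ⟨a1, a2, a3, Finset.mem_union_right _ a4, Finset.mem_union_right _ a5⟩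
  · rintro ⟨t, r⟩ ⟨t', r'⟩ h
    dsimp only at h
    have mem1 : ∀ (s : Fin k1) (ρ : Fin 2),
        (if ρ = 0 then (e1 s).1 else (e1 s).2) ∈ S1 := by
      intro s ρ; obtain ⟨_, _, _, a4, a5⟩ := h1.1 s; split <;> assumption
    have mem2 : ∀ (s : Fin k2) (ρ : Fin 2),
        (if ρ = 0 then (e2 s).1 else (e2 s).2) ∈ S2 := by
      intro s ρ; obtain ⟨_, _, _, a4, a5⟩ := h2.1 s; split <;> assumption
    by_cases ht : (t : ℕ) < k1 <;> by_cases ht' : (t' : ℕ) < k1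
    · rw [dif_pos ht, dif_pos ht'] at h
      have := h1.2 (a₁ := (⟨⟨t, ht⟩, r⟩ : Fin k1 × Fin 2)) (a₂ := (⟨⟨t', ht'⟩, r'⟩)) h
      simp [Prod.ext_iff, Fin.ext_iff] at this ⊢
      exact this
    · rw [dif_pos ht, dif_neg ht'] at h
      exfalso
      have hm1 : (if r = 0 then (e1 ⟨t, ht⟩).1 else (e1 ⟨t, ht⟩).2) ∈ S1 := mem1 _ r
      rw [h] at hm1
      exact Finset.disjoint_left.mp hd hm1 (mem2 _ r')
    · rw [dif_neg ht, dif_pos ht'] at h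
      exfalso
      have hm1 : (if r' = 0 then (e1 ⟨t', ht'⟩).1 else (e1 ⟨t', ht'⟩).2) ∈ S1 := mem1 _ r'
      rw [← h] at hm1
      exact Finset.disjoint_left.mp hd hm1 (mem2 _ r)
    · rw [dif_neg ht, dif_neg ht'] at h
      have := h2.2 (a₁ := (⟨⟨(t:ℕ)-k1, by have := t.2; omega⟩, r⟩ : Fin k2 × Fin 2))
        (a₂ := (⟨⟨(t':ℕ)-k1, by have := t'.2; omega⟩, r'⟩)) h
      simp [Prod.ext_iff, Fin.ext_iff] at this ⊢
      omega

lemma contains_fan {c : V} {S : Finset V} {ℓ : ℕ} {e} (hG : Good G c S ℓ e) :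
    Contains (fan ℓ) G := by
  classical
  refine ⟨fun o => Option.elim o c (fun p => if p.2 = 0 then (e p.1).1 else (e p.1).2), ?_, ?_⟩
  · rintro (_ | a) (_ | b) h
    · rfl
    · exfalso
      dsimp at h
      obtain ⟨a1, a2, _, _, _⟩ := hG.1 b.1
      rcases h with h
      split at h
      · exact G.ne_of_adj a1 h
      · exact G.ne_of_adj a2 h
    · exfalso
      dsimp at h
      obtain ⟨a1, a2, _, _, _⟩ := hG.1 a.1
      split at h
      · exact G.ne_of_adj a1 h.symm
      · exact G.ne_of_adj a2 h.symm
    · dsimp at h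
      exact congrArg some (hG.2 h)
  · rintro (_ | a) (_ | b) hab <;>
      simp only [fan, SimpleGraph.fromRel_adj] at hab
    · exact absurd rfl hab.1
    · obtain ⟨a1, a2, _, _, _⟩ := hG.1 b.1
      dsimp
      split
      · exact a1
      · exact a2
    · obtain ⟨a1, a2, _, _, _⟩ := hG.1 a.1
      dsimp
      split
      · exact a1.symm
      · exact a2.symm
    · obtain ⟨hne, h | h⟩ := hab
      · rcases h with h | h | ⟨i, x, y, hx, hy⟩
        · exact absurd h (by simp)
        · exact absurd h (by simp)
        · obtain ⟨_, _, a3, _, _⟩ := hG.1 i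
          cases hx; cases hy
          dsimp
          have hxy : x ≠ y := by rintro rfl; exact hne rfl
          fin_cases x <;> fin_cases y <;> simp at hxy ⊢ <;>
            first | exact a3 | exact a3.symm
      · rcases h with h | h | ⟨i, x, y, hx, hy⟩
        · exact absurd h (by simp)
        · exact absurd h (by simp)
        · obtain ⟨_, _, a3, _, _⟩ := hG.1 i
          cases hx; cases hy
          dsimp
          have hxy : x ≠ y := by rintro rfl; exact hne rfl
          fin_cases x <;> fin_cases y <;> simp at hxy ⊢ <;>
            first | exact a3 | exact a3.symm



set_option linter.unusedSectionVars false in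
lemma no_six
    (h6 : ∀ s : Finset V, (↑s : Set V).Pairwise (fun a b => ¬ G.Adj a b) → s.card ≤ 5)
    (a b c d e f : V)
    (dab : a ≠ b) (dac : a ≠ c) (dad : a ≠ d) (dae : a ≠ e) (daf : a ≠ f)
    (dbc : b ≠ c) (dbd : b ≠ d) (dbe : b ≠ e) (dbf : b ≠ f)
    (dcd : c ≠ d) (dce : c ≠ e) (dcf : c ≠ f)
    (dde : d ≠ e) (ddf : d ≠ f) (def' : e ≠ f)
    (nab : ¬ G.Adj a b) (nac : ¬ G.Adj a c) (nad : ¬ G.Adj a d) (nae : ¬ G.Adj a e)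
    (naf : ¬ G.Adj a f)
    (nbc : ¬ G.Adj b c) (nbd : ¬ G.Adj b d) (nbe : ¬ G.Adj b e) (nbf : ¬ G.Adj b f)
    (ncd : ¬ G.Adj c d) (nce : ¬ G.Adj c e) (ncf : ¬ G.Adj c f)
    (nde : ¬ G.Adj d e) (ndf : ¬ G.Adj d f) (nef : ¬ G.Adj e f) : False := by
  classical
  have nba : ¬ G.Adj b a := fun h => nab h.symm
  have nca : ¬ G.Adj c a := fun h => nac h.symm
  have nda : ¬ G.Adj d a := fun h => nad h.symm
  have nea : ¬ G.Adj e a := fun h => nae h.symm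
  have nfa : ¬ G.Adj f a := fun h => naf h.symm
  have ncb : ¬ G.Adj c b := fun h => nbc h.symm
  have ndb : ¬ G.Adj d b := fun h => nbd h.symm
  have neb : ¬ G.Adj e b := fun h => nbe h.symm
  have nfb : ¬ G.Adj f b := fun h => nbf h.symm
  have ndc : ¬ G.Adj d c := fun h => ncd h.symm
  have nec : ¬ G.Adj e c := fun h => nce h.symm
  have nfc : ¬ G.Adj f c := fun h => ncf h.symm
  have ned : ¬ G.Adj e d := fun h => nde h.symm
  have nfd : ¬ G.Adj f d := fun h => ndf h.symm
  have nfe : ¬ G.Adj f e := fun h => nef h.symm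
  have hs : ({a, b, c, d, e, f} : Finset V).card = 6 := by
    rw [Finset.card_insert_of_notMem (by simp [dab, dac, dad, dae, daf]),
      Finset.card_insert_of_notMem (by simp [dbc, dbd, dbe, dbf]),
      Finset.card_insert_of_notMem (by simp [dcd, dce, dcf]),
      Finset.card_insert_of_notMem (by simp [dde, ddf]),
      Finset.card_insert_of_notMem (by simp [def']), Finset.card_singleton]
  have hp : ((↑({a, b, c, d, e, f} : Finset V)) : Set V).Pairwise (fun x y => ¬ G.Adj x y) := by
    intro x hx y hy hxy
    simp only [Finset.coe_insert, Set.mem_insert_iff, Finset.coe_singleton,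
      Set.mem_singleton_iff] at hx hy
    rcases hx with rfl | rfl | rfl | rfl | rfl | rfl <;>
      rcases hy with rfl | rfl | rfl | rfl | rfl | rfl <;>
      first | exact absurd rfl hxy | assumption
  have := h6 _ hp
  omega


set_option linter.unusedSectionVars false in
lemma fan_of_cliques {ℓ : ℕ} (hF : ¬ Contains (fan ℓ) G) (c : V)
    (K1 K2 K3 K4 : Finset V) (k1 k2 k3 k4 : ℕ)
    (hC1 : G.IsClique (↑K1 : Set V)) (hC2 : G.IsClique (↑K2 : Set V))
    (hC3 : G.IsClique (↑K3 : Set V)) (hC4 : G.IsClique (↑K4 : Set V))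
    (hA1 : ∀ x ∈ K1, G.Adj c x) (hA2 : ∀ x ∈ K2, G.Adj c x)
    (hA3 : ∀ x ∈ K3, G.Adj c x) (hA4 : ∀ x ∈ K4, G.Adj c x)
    (hd12 : Disjoint K1 K2) (hd13 : Disjoint K1 K3) (hd14 : Disjoint K1 K4)
    (hd23 : Disjoint K2 K3) (hd24 : Disjoint K2 K4) (hd34 : Disjoint K3 K4)
    (hk1 : 2*k1 ≤ K1.card) (hk2 : 2*k2 ≤ K2.card)
    (hk3 : 2*k3 ≤ K3.card) (hk4 : 2*k4 ≤ K4.card)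
    (hsum : k1 + k2 + k3 + k4 = ℓ) : False := by
  classical
  obtain ⟨e1, he1⟩ := good_of_clique G c K1 hC1 hA1 k1 hk1
  obtain ⟨e2, he2⟩ := good_of_clique G c K2 hC2 hA2 k2 hk2
  obtain ⟨e3, he3⟩ := good_of_clique G c K3 hC3 hA3 k3 hk3
  obtain ⟨e4, he4⟩ := good_of_clique G c K4 hC4 hA4 k4 hk4
  obtain ⟨e12, he12⟩ := good_union G he1 he2 hd12
  obtain ⟨e123, he123⟩ := good_union G he12 he3
    (by rw [Finset.disjoint_union_left]; exact ⟨hd13, hd23⟩)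
  obtain ⟨e', he'⟩ := good_union G he123 he4
    (by rw [Finset.disjoint_union_left, Finset.disjoint_union_left]
        exact ⟨⟨hd14, hd24⟩, hd34⟩)
  have := contains_fan G he'
  rw [hsum] at this
  exact hF this

set_option linter.unusedSectionVars false in
lemma fan3 {ℓ : ℕ} (hF : ¬ Contains (fan ℓ) G) (c : V)
    (K1 K2 K3 : Finset V) (k1 k2 k3 : ℕ)
    (hC1 : G.IsClique (↑K1 : Set V)) (hC2 : G.IsClique (↑K2 : Set V))
    (hC3 : G.IsClique (↑K3 : Set V))
    (hA1 : ∀ x ∈ K1, G.Adj c x) (hA2 : ∀ x ∈ K2, G.Adj c x)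
    (hA3 : ∀ x ∈ K3, G.Adj c x)
    (hd12 : Disjoint K1 K2) (hd13 : Disjoint K1 K3) (hd23 : Disjoint K2 K3)
    (hk1 : 2*k1 ≤ K1.card) (hk2 : 2*k2 ≤ K2.card) (hk3 : 2*k3 ≤ K3.card)
    (hsum : k1 + k2 + k3 = ℓ) : False := by
  refine fan_of_cliques G hF c K1 K2 K3 ∅ k1 k2 k3 0 hC1 hC2 hC3 (by simp) hA1 hA2 hA3
    (by simp) hd12 hd13 (by simp) hd23 (by simp) (by simp) hk1 hk2 hk3 (by simp) (by omega)

set_option linter.unusedSectionVars false in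
lemma fan2 {ℓ : ℕ} (hF : ¬ Contains (fan ℓ) G) (c : V)
    (K1 K2 : Finset V) (k1 k2 : ℕ)
    (hC1 : G.IsClique (↑K1 : Set V)) (hC2 : G.IsClique (↑K2 : Set V))
    (hA1 : ∀ x ∈ K1, G.Adj c x) (hA2 : ∀ x ∈ K2, G.Adj c x)
    (hd12 : Disjoint K1 K2)
    (hk1 : 2*k1 ≤ K1.card) (hk2 : 2*k2 ≤ K2.card)
    (hsum : k1 + k2 = ℓ) : False := by
  refine fan3 G hF c K1 K2 ∅ k1 k2 0 hC1 hC2 (by simp) hA1 hA2 (by simp)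
    hd12 (by simp) (by simp) hk1 hk2 (by simp) (by omega)

end FanAux


private lemma spare3' : ∀ i j : Fin 5, i = j ∨ ∃ k l m : Fin 5, k ≠ i ∧ k ≠ j ∧ l ≠ i ∧ l ≠ j ∧
    m ≠ i ∧ m ≠ j ∧ k ≠ l ∧ k ≠ m ∧ l ≠ m := by decide

private lemma spare3 (i j : Fin 5) (h : i ≠ j) : ∃ k l m : Fin 5, k ≠ i ∧ k ≠ j ∧ l ≠ i ∧ l ≠ j ∧
    m ≠ i ∧ m ≠ j ∧ k ≠ l ∧ k ≠ m ∧ l ≠ m := (spare3' i j).resolve_left h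

private lemma spare2' : ∀ i j k : Fin 5, i = j ∨ i = k ∨ j = k ∨ ∃ l m : Fin 5,
    l ≠ i ∧ l ≠ j ∧ l ≠ k ∧ m ≠ i ∧ m ≠ j ∧ m ≠ k ∧ l ≠ m := by decide

private lemma spare2 (i j k : Fin 5) (h1 : i ≠ j) (h2 : i ≠ k) (h3 : j ≠ k) : ∃ l m : Fin 5,
    l ≠ i ∧ l ≠ j ∧ l ≠ k ∧ m ≠ i ∧ m ≠ j ∧ m ≠ k ∧ l ≠ m :=
  (((spare2' i j k).resolve_left h1).resolve_left h2).resolve_left h3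

theorem X14_reduction {V : Type} [Fintype V] [DecidableEq V] (ℓ : ℕ) (hℓ : 6 ≤ ℓ)
    (G : SimpleGraph V) [DecidableRel G.Adj]
    (hcard : Fintype.card V = 10 * ℓ + 1)
    (hF : ¬ Contains (fan ℓ) G)
    (u : Fin 5 → V) (hu : Function.Injective u)
    (huI : (Set.range u).Pairwise fun a b => ¬ G.Adj a b)
    (h6 : ∀ s : Finset V, (↑s : Set V).Pairwise (fun a b => ¬ G.Adj a b) → s.card ≤ 5)
    (hΔ : ∀ v : V, G.degree v ≤ 2 * ℓ + 3)
    (hω : ∀ s : Finset V, G.IsClique (↑s : Set V) → s.card ≤ 2 * ℓ - 2)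
    (hcliq : ∀ m : Fin 5, G.IsClique (↑(insert (u m) (XSi G u 1 m)) : Set V))
    (hord : ∀ i j : Fin 5, i ≤ j → (XSi G u 1 j).card ≤ (XSi G u 1 i).card) :
    (XSi G u 1 3).card ≤ 2 * ℓ - 4 ∧ (XS G u 1).card ≤ 10 * ℓ - 17 := by
  classical
  set B : Fin 5 → Finset V := fun i => XSi G u 1 i with hB
  have hBmem : ∀ (i : Fin 5) (v : V), v ∈ B i ↔
      ((∀ j, v ≠ u j) ∧ (Finset.univ.filter fun j => G.Adj v (u j)).card = 1)
        ∧ G.Adj v (u i) := by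
    intro i v
    simp [hB, XSi, XS, Finset.mem_filter]
  have hBadj : ∀ (i : Fin 5) (v : V), v ∈ B i → G.Adj v (u i) :=
    fun i v hv => ((hBmem i v).mp hv).2
  have hBne : ∀ (i : Fin 5) (v : V), v ∈ B i → ∀ j, v ≠ u j :=
    fun i v hv => ((hBmem i v).mp hv).1.1
  have huB : ∀ (i j : Fin 5), u j ∉ B i := fun i j hj => hBne i (u j) hj j rfl
  have hBonly : ∀ (i : Fin 5) (v : V), v ∈ B i → ∀ j, j ≠ i → ¬ G.Adj v (u j) := by
    intro i v hv j hj hadj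
    obtain ⟨⟨_, hcard1⟩, hadji⟩ := (hBmem i v).mp hv
    obtain ⟨a, ha⟩ := Finset.card_eq_one.mp hcard1
    have hi : i ∈ Finset.univ.filter fun j => G.Adj v (u j) := by
      simp [hadji]
    have hjmem : j ∈ Finset.univ.filter fun j => G.Adj v (u j) := by
      simp [hadj]
    rw [ha] at hi hjmem
    simp at hi hjmem
    exact hj (hjmem.trans hi.symm)
  have hBdisj : ∀ (i j : Fin 5), i ≠ j → Disjoint (B i) (B j) := by
    intro i j hij
    rw [Finset.disjoint_left]
    intro v hvi hvj
    exact hBonly i v hvi j (fun h => hij h.symm) (hBadj j v hvj)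
  have hBneq : ∀ {a b : V} {x y : Fin 5}, x ≠ y → a ∈ B x → b ∈ B y → a ≠ b :=
    fun hxy ha hb h => (Finset.disjoint_left.mp (hBdisj _ _ hxy) ha (h ▸ hb))
  have hBclique : ∀ i : Fin 5, G.IsClique (↑(B i) : Set V) := by
    intro i
    exact (hcliq i).subset (by
      rw [Finset.coe_subset]
      exact Finset.subset_insert _ _)
  have hBcard : ∀ i : Fin 5, (B i).card ≤ 2 * ℓ - 3 := by
    intro i
    have h1 : (insert (u i) (B i)).card ≤ 2 * ℓ - 2 := hω _ (hcliq i)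
    have h2 : (insert (u i) (B i)).card = (B i).card + 1 :=
      Finset.card_insert_of_notMem (huB i i)
    omega
  have huu : ∀ {i j : Fin 5}, i ≠ j → ¬ G.Adj (u i) (u j) := by
    intro i j hij
    exact huI (Set.mem_range_self i) (Set.mem_range_self j) (fun h => hij (hu h))
  have h2notB : ∀ (w : V) (t s : Fin 5), t ≠ s → G.Adj w (u t) → G.Adj w (u s) →
      ∀ r, w ∉ B r := by
    intro w t s hts ht hs r hw
    rcases eq_or_ne t r with rfl | htr
    · exact hBonly t w hw s (fun h => hts h.symm) hs
    · exact hBonly r w hw t htr ht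
  have main : (B 3).card ≤ 2 * ℓ - 4 := by
    by_contra hc
    have hbig : ∀ i : Fin 5, i ≠ 4 → (B i).card = 2 * ℓ - 3 := by
      intro i hi
      have hi3 : i ≤ 3 := by revert hi; revert i; decide
      have h1 : (B 3).card ≤ (B i).card := hord i 3 hi3
      have h2 := hBcard i
      omega
    have hAne : ∀ (v : V) (t : Fin 5), (∀ s, v ≠ u s) → G.Adj v (u t) →
        (B t).card = 2*ℓ-3 → ((B t).filter (fun x => ¬ G.Adj v x)).Nonempty := by
      intro v t hvu hvt hBt
      rw [Finset.nonempty_iff_ne_empty]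
      intro hemp
      have hall : ∀ x ∈ B t, G.Adj v x := by
        intro x hx
        by_contra hno
        have hxf : x ∈ (B t).filter (fun x => ¬ G.Adj v x) := Finset.mem_filter.mpr ⟨hx, hno⟩
        rw [hemp] at hxf
        exact absurd hxf (Finset.notMem_empty x)
      have hvB : v ∉ B t := fun hv => G.irrefl (hall v hv)
      have hclique : G.IsClique (↑(insert v (insert (u t) (B t))) : Set V) := by
        rw [Finset.coe_insert, SimpleGraph.isClique_insert]
        refine ⟨hcliq t, ?_⟩
        intro b hb hne
        rw [Finset.mem_coe, Finset.mem_insert] at hb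
        rcases hb with rfl | hb
        · exact hvt
        · exact hall b hb
      have hvnotin : v ∉ insert (u t) (B t) := by simp [hvu t, hvB]
      have hcard2 : (insert v (insert (u t) (B t))).card = (B t).card + 2 := by
        rw [Finset.card_insert_of_notMem hvnotin,
          Finset.card_insert_of_notMem (huB t t)]
      have := hω _ hclique
      omega
    have hcap3 : ∀ (b : V) (t s : Fin 5), t ≠ s → (B t).card = 2*ℓ-3 → b ∈ B t →
        ∀ D : Finset V, D ⊆ B s → (∀ x ∈ D, G.Adj b x) → D.card ≤ 3 := by
      intro b t s hts hBt hb D hDs hDadj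
      by_contra hD
      have hbmem : b ∈ insert (u t) (B t) := Finset.mem_insert_of_mem hb
      refine FanAux.fan2 G hF b ((insert (u t) (B t)).erase b) D (ℓ-2) 2
        ?_ ?_ ?_ hDadj ?_ ?_ (by omega) (by omega)
      · exact (hcliq t).subset (by rw [Finset.coe_subset]; exact Finset.erase_subset _ _)
      · exact (hBclique s).subset (by rw [Finset.coe_subset]; exact hDs)
      · intro x hx
        obtain ⟨hxb, hxm⟩ := Finset.mem_erase.mp hx
        exact (hcliq t) (Finset.mem_coe.mpr hbmem) (Finset.mem_coe.mpr hxm) hxb.symm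
      · rw [Finset.disjoint_left]
        intro x hx hxD
        obtain ⟨hxb, hxm⟩ := Finset.mem_erase.mp hx
        rcases Finset.mem_insert.mp hxm with rfl | hxm
        · exact huB s t (hDs hxD)
        · exact Finset.disjoint_left.mp (hBdisj t s hts) hxm (hDs hxD)
      · rw [Finset.card_erase_of_mem hbmem, Finset.card_insert_of_notMem (huB t t)]
        omega
    -- counting: at least five vertices outside `U ∪ B₀ ∪ B₁ ∪ B₂ ∪ B₃` missing `u 4`
    set Uf : Finset V := Finset.univ.image u with hUf
    have hUfcard : Uf.card = 5 := by
      rw [hUf, Finset.card_image_of_injective _ hu, Finset.card_univ, Fintype.card_fin]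
    have hUfmem : ∀ x, x ∈ Uf ↔ ∃ j, u j = x := by
      intro x; simp [hUf]
    have hUfdisj : ∀ t : Fin 5, Disjoint Uf (B t) := by
      intro t
      rw [Finset.disjoint_left]
      rintro x hx
      rcases (hUfmem x).mp hx with ⟨j, rfl⟩
      exact fun h => huB t j h
    set T : Finset V := Uf ∪ B 0 ∪ B 1 ∪ B 2 ∪ B 3 with hT
    have d0 : Disjoint Uf (B 0) := hUfdisj 0
    have d1 : Disjoint (Uf ∪ B 0) (B 1) :=
      Finset.disjoint_union_left.mpr ⟨hUfdisj 1, hBdisj 0 1 (by decide)⟩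
    have d2 : Disjoint (Uf ∪ B 0 ∪ B 1) (B 2) :=
      Finset.disjoint_union_left.mpr ⟨Finset.disjoint_union_left.mpr
        ⟨hUfdisj 2, hBdisj 0 2 (by decide)⟩, hBdisj 1 2 (by decide)⟩
    have d3 : Disjoint (Uf ∪ B 0 ∪ B 1 ∪ B 2) (B 3) :=
      Finset.disjoint_union_left.mpr ⟨Finset.disjoint_union_left.mpr
        ⟨Finset.disjoint_union_left.mpr ⟨hUfdisj 3, hBdisj 0 3 (by decide)⟩,
          hBdisj 1 3 (by decide)⟩, hBdisj 2 3 (by decide)⟩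
    have hTcard : T.card = 8 * ℓ - 7 := by
      rw [hT, Finset.card_union_of_disjoint d3, Finset.card_union_of_disjoint d2,
        Finset.card_union_of_disjoint d1, Finset.card_union_of_disjoint d0,
        hUfcard, hbig 0 (by decide), hbig 1 (by decide), hbig 2 (by decide),
        hbig 3 (by decide)]
      omega
    set W : Finset V := Finset.univ \ T with hW
    have hWcard : W.card = 2 * ℓ + 8 := by
      rw [hW, Finset.card_sdiff_of_subset (Finset.subset_univ _), Finset.card_univ, hcard, hTcard]
      omega
    set R : Finset V := W.filter (fun v => ¬ G.Adj v (u 4)) with hR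
    have hRcard : 5 ≤ R.card := by
      have hsplit := Finset.card_filter_add_card_filter_not
        (s := W) (p := fun v => G.Adj v (u 4))
      have hnb : W.filter (fun v => G.Adj v (u 4)) ⊆ G.neighborFinset (u 4) := by
        intro x hx
        rw [SimpleGraph.mem_neighborFinset]
        exact ((Finset.mem_filter.mp hx).2).symm
      have hnb2 := Finset.card_le_card hnb
      rw [G.card_neighborFinset_eq_degree] at hnb2
      have := hΔ (u 4)
      have hReq : (Finset.filter (fun v => ¬G.Adj v (u 4)) W).card = R.card := rfl
      omega
    have hKsub : ∀ (v : V) (x : Fin 5),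
        insert (u x) ((B x).filter (fun w => G.Adj v w)) ⊆ insert (u x) (B x) :=
      fun v x => Finset.insert_subset_insert _ (Finset.filter_subset _ _)
    have hKclique : ∀ (v : V) (x : Fin 5),
        G.IsClique (↑(insert (u x) ((B x).filter (fun w => G.Adj v w))) : Set V) :=
      fun v x => (hcliq x).subset (by exact_mod_cast Finset.coe_subset.mpr (hKsub v x))
    have hKadj : ∀ (v : V) (x : Fin 5), G.Adj v (u x) →
        ∀ w ∈ insert (u x) ((B x).filter (fun w => G.Adj v w)), G.Adj v w := by
      intro v x hvx w hw
      rcases Finset.mem_insert.mp hw with rfl | hw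
      · exact hvx
      · exact (Finset.mem_filter.mp hw).2
    have hKdisj : ∀ (v : V) (x y : Fin 5), x ≠ y →
        Disjoint (insert (u x) ((B x).filter (fun w => G.Adj v w)))
          (insert (u y) ((B y).filter (fun w => G.Adj v w))) := by
      intro v x y hxy
      rw [Finset.disjoint_left]
      intro a ha ha'
      have ha2 := hKsub v x ha
      have ha2' := hKsub v y ha'
      rcases Finset.mem_insert.mp ha2 with rfl | hax
      · rcases Finset.mem_insert.mp ha2' with heq | hay
        · exact hxy (hu heq)
        · exact huB y x hay
      · rcases Finset.mem_insert.mp ha2' with heq | hay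
        · exact huB x y (heq ▸ hax)
        · exact Finset.disjoint_left.mp (hBdisj x y hxy) hax hay
    have hKcard : ∀ (v : V) (x : Fin 5),
        (insert (u x) ((B x).filter (fun w => G.Adj v w))).card =
          ((B x).filter (fun w => G.Adj v w)).card + 1 :=
      fun v x => Finset.card_insert_of_notMem
        (fun h => huB x x (Finset.filter_subset _ _ h))
    have hfilt : ∀ (v : V) (x : Fin 5),
        ((B x).filter (fun w => G.Adj v w)).card
          + ((B x).filter (fun w => ¬ G.Adj v w)).card = (B x).card :=
      fun v x => Finset.card_filter_add_card_filter_not (p := fun w => G.Adj v w)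
    have fanend2 : ∀ (v : V) (s s' : Fin 5), s ≠ s' → G.Adj v (u s) → G.Adj v (u s') →
        (B s).card = 2*ℓ-3 → (B s').card = 2*ℓ-3 →
        ((B s).filter (fun x => ¬ G.Adj v x)).card ≤ 3 →
        ((B s').filter (fun x => ¬ G.Adj v x)).card ≤ 3 → False := by
      intro v s s' hss hvs hvs' hcs hcs' ha3 ha3'
      have hp := hfilt v s
      have hp' := hfilt v s'
      have hic := hKcard v s
      have hic' := hKcard v s'
      obtain ⟨k1, k2, hk⟩ : ∃ k1 k2 : ℕ, k1 + k2 = ℓ ∧ 2*k1 ≤ 2*ℓ-5 ∧ 2*k2 ≤ 2*ℓ-5 :=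
        ⟨ℓ/2, ℓ - ℓ/2, by omega⟩
      exact FanAux.fan2 G hF v (insert (u s) ((B s).filter (fun w => G.Adj v w)))
        (insert (u s') ((B s').filter (fun w => G.Adj v w))) k1 k2
        (hKclique v s) (hKclique v s') (hKadj v s hvs) (hKadj v s' hvs')
        (hKdisj v s s' hss) (by omega) (by omega) hk.1
    have fanend3 : ∀ (v : V) (s s' s'' : Fin 5), s ≠ s' → s ≠ s'' → s' ≠ s'' →
        G.Adj v (u s) → G.Adj v (u s') → G.Adj v (u s'') →
        (B s).card = 2*ℓ-3 → (B s').card = 2*ℓ-3 → (B s'').card = 2*ℓ-3 →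
        ((B s).filter (fun x => ¬ G.Adj v x)).card ≤ 6 →
        ((B s').filter (fun x => ¬ G.Adj v x)).card ≤ 6 →
        ((B s'').filter (fun x => ¬ G.Adj v x)).card ≤ 6 → False := by
      intro v s s' s'' h1 h2 h3 hvs hvs' hvs'' hcs hcs' hcs'' ha6 ha6' ha6''
      have hp := hfilt v s
      have hp' := hfilt v s'
      have hp'' := hfilt v s''
      have hic := hKcard v s
      have hic' := hKcard v s'
      have hic'' := hKcard v s''
      obtain ⟨k1, k2, k3, hk⟩ : ∃ k1 k2 k3 : ℕ, k1 + k2 + k3 = ℓ ∧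
          2*k1 ≤ 2*ℓ-8 ∧ 2*k2 ≤ 2*ℓ-8 ∧ 2*k3 ≤ 2*ℓ-8 :=
        ⟨ℓ-4, min (ℓ-4) 4, ℓ-(ℓ-4)-min (ℓ-4) 4, by omega⟩
      exact FanAux.fan3 G hF v (insert (u s) ((B s).filter (fun w => G.Adj v w)))
        (insert (u s') ((B s').filter (fun w => G.Adj v w)))
        (insert (u s'') ((B s'').filter (fun w => G.Adj v w))) k1 k2 k3
        (hKclique v s) (hKclique v s') (hKclique v s'')
        (hKadj v s hvs) (hKadj v s' hvs') (hKadj v s'' hvs'')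
        (hKdisj v s s' h1) (hKdisj v s s'' h2) (hKdisj v s' s'' h3)
        (by omega) (by omega) (by omega) hk.1
    have lemma2 : ∀ (v : V) (i j : Fin 5), i ≠ j → i ≠ 4 → j ≠ 4 → (∀ t, v ≠ u t) →
        G.Adj v (u i) → G.Adj v (u j) → (∀ t, t ≠ i → t ≠ j → ¬ G.Adj v (u t)) → False := by
      intro v i j hij hi4 hj4 hvu hvi hvj hno
      obtain ⟨k, l, m, hki, hkj, hli, hlj, hmi, hmj, hkl, hkm, hlm⟩ := spare3 i j hij
      have hBi := hbig i hi4
      have hBj := hbig j hj4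
      have hvB : ∀ r, v ∉ B r := h2notB v i j hij hvi hvj
      have hbip : ∀ a ∈ (B i).filter (fun x => ¬ G.Adj v x),
          ∀ b ∈ (B j).filter (fun x => ¬ G.Adj v x), G.Adj a b := by
        intro a ha b hb
        obtain ⟨haB, hav⟩ := Finset.mem_filter.mp ha
        obtain ⟨hbB, hbv⟩ := Finset.mem_filter.mp hb
        by_contra hab
        exact FanAux.no_six G h6 v (u k) (u l) (u m) a b
          (hvu k) (hvu l) (hvu m)
          (fun h => hvB i (by rw [h]; exact haB)) (fun h => hvB j (by rw [h]; exact hbB))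
          (fun h => hkl (hu h)) (fun h => hkm (hu h))
          ((hBne i a haB k).symm) ((hBne j b hbB k).symm)
          (fun h => hlm (hu h)) ((hBne i a haB l).symm) ((hBne j b hbB l).symm)
          ((hBne i a haB m).symm) ((hBne j b hbB m).symm)
          (hBneq hij haB hbB)
          (hno k hki hkj) (hno l hli hlj) (hno m hmi hmj) hav hbv
          (huu hkl) (huu hkm)
          (fun h => hBonly i a haB k hki h.symm) (fun h => hBonly j b hbB k hkj h.symm)
          (huu hlm)
          (fun h => hBonly i a haB l hli h.symm) (fun h => hBonly j b hbB l hlj h.symm)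
          (fun h => hBonly i a haB m hmi h.symm) (fun h => hBonly j b hbB m hmj h.symm)
          hab
      obtain ⟨a, ha⟩ := hAne v i hvu hvi hBi
      obtain ⟨b, hb⟩ := hAne v j hvu hvj hBj
      have hAj3 : ((B j).filter (fun x => ¬ G.Adj v x)).card ≤ 3 := by
        refine hcap3 a i j hij hBi (Finset.mem_filter.mp ha).1 _
          (Finset.filter_subset _ _) ?_
        intro x hx
        exact hbip a ha x hx
      have hAi3 : ((B i).filter (fun x => ¬ G.Adj v x)).card ≤ 3 := by
        refine hcap3 b j i hij.symm hBj (Finset.mem_filter.mp hb).1 _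
          (Finset.filter_subset _ _) ?_
        intro x hx
        exact (hbip x hx b hb).symm
      exact fanend2 v i j hij hvi hvj hBi hBj hAi3 hAj3
    have key67 : ∀ (v : V) (x y z : Fin 5), x ≠ y → x ≠ z → y ≠ z →
        x ≠ 4 → y ≠ 4 → z ≠ 4 → (∀ t, v ≠ u t) →
        G.Adj v (u x) → G.Adj v (u y) → G.Adj v (u z) →
        (∀ t, t ≠ x → t ≠ y → t ≠ z → ¬ G.Adj v (u t)) →
        4 ≤ ((B y).filter (fun w => ¬ G.Adj v w)).card →
        ((B z).filter (fun w => ¬ G.Adj v w)).card ≤ 6 := by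
      intro v x y z hxy hxz hyz hx4 hy4 hz4 hvu hvx hvy hvz hno h4y
      obtain ⟨l, m, hlx, hly, hlz, hmx, hmy, hmz, hlm⟩ := spare2 x y z hxy hxz hyz
      have hBx := hbig x hx4
      have hBy := hbig y hy4
      have hBz := hbig z hz4
      have hvB : ∀ r, v ∉ B r := h2notB v x y hxy hvx hvy
      obtain ⟨a, ha⟩ := hAne v x hvu hvx hBx
      obtain ⟨haB, hav⟩ := Finset.mem_filter.mp ha
      have h1 : (((B y).filter (fun w => ¬ G.Adj v w)).filter (fun w => G.Adj a w)).card ≤ 3 :=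
        hcap3 a x y hxy hBx haB _
          ((Finset.filter_subset _ _).trans (Finset.filter_subset _ _))
          (fun w hw => (Finset.mem_filter.mp hw).2)
      have hsplity := Finset.card_filter_add_card_filter_not
        (s := (B y).filter (fun w => ¬ G.Adj v w)) (p := fun w => G.Adj a w)
      have h2 : (((B y).filter (fun w => ¬ G.Adj v w)).filter (fun w => ¬ G.Adj a w)).Nonempty := by
        rw [← Finset.card_pos]
        omega
      obtain ⟨b, hb⟩ := h2
      obtain ⟨hbAy, hba⟩ := Finset.mem_filter.mp hb
      obtain ⟨hbB, hbv⟩ := Finset.mem_filter.mp hbAy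
      have hbipz : ∀ c ∈ (B z).filter (fun w => ¬ G.Adj v w), ¬ G.Adj a c → G.Adj b c := by
        intro c hc hac
        obtain ⟨hcB, hcv⟩ := Finset.mem_filter.mp hc
        by_contra hbc
        exact FanAux.no_six G h6 v (u l) (u m) a b c
          (hvu l) (hvu m)
          (fun h => hvB x (by rw [h]; exact haB)) (fun h => hvB y (by rw [h]; exact hbB))
          (fun h => hvB z (by rw [h]; exact hcB))
          (fun h => hlm (hu h))
          ((hBne x a haB l).symm) ((hBne y b hbB l).symm) ((hBne z c hcB l).symm)
          ((hBne x a haB m).symm) ((hBne y b hbB m).symm) ((hBne z c hcB m).symm)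
          (hBneq hxy haB hbB) (hBneq hxz haB hcB) (hBneq hyz hbB hcB)
          (hno l hlx hly hlz) (hno m hmx hmy hmz) hav hbv hcv
          (huu hlm)
          (fun h => hBonly x a haB l hlx h.symm) (fun h => hBonly y b hbB l hly h.symm)
          (fun h => hBonly z c hcB l hlz h.symm)
          (fun h => hBonly x a haB m hmx h.symm) (fun h => hBonly y b hbB m hmy h.symm)
          (fun h => hBonly z c hcB m hmz h.symm)
          hba hac hbc
      have h3 : ((B z).filter (fun w => ¬ G.Adj v w)).filter (fun w => ¬ G.Adj a w) ⊆
          ((B z).filter (fun w => ¬ G.Adj v w)).filter (fun w => G.Adj b w) := by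
        intro c hc
        obtain ⟨hcAz, hca⟩ := Finset.mem_filter.mp hc
        exact Finset.mem_filter.mpr ⟨hcAz, hbipz c hcAz hca⟩
      have h4 : (((B z).filter (fun w => ¬ G.Adj v w)).filter (fun w => G.Adj b w)).card ≤ 3 :=
        hcap3 b y z hyz hBy hbB _
          ((Finset.filter_subset _ _).trans (Finset.filter_subset _ _))
          (fun w hw => (Finset.mem_filter.mp hw).2)
      have h5 : (((B z).filter (fun w => ¬ G.Adj v w)).filter (fun w => G.Adj a w)).card ≤ 3 :=
        hcap3 a x z hxz hBx haB _
          ((Finset.filter_subset _ _).trans (Finset.filter_subset _ _))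
          (fun w hw => (Finset.mem_filter.mp hw).2)
      have hsplitz := Finset.card_filter_add_card_filter_not
        (s := (B z).filter (fun w => ¬ G.Adj v w)) (p := fun w => G.Adj a w)
      have h6' := Finset.card_le_card h3
      omega
    have lemma3 : ∀ (v : V) (i j k : Fin 5), i ≠ j → i ≠ k → j ≠ k →
        i ≠ 4 → j ≠ 4 → k ≠ 4 →
        (∀ t, v ≠ u t) → G.Adj v (u i) → G.Adj v (u j) → G.Adj v (u k) →
        (∀ t, t ≠ i → t ≠ j → t ≠ k → ¬ G.Adj v (u t)) → False := by
      intro v i j k hij hik hjk hi4 hj4 hk4 hvu hvi hvj hvk hno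
      have endcase : ∀ (x y z : Fin 5), x ≠ y → x ≠ z → y ≠ z →
          x ≠ 4 → y ≠ 4 → z ≠ 4 →
          G.Adj v (u x) → G.Adj v (u y) → G.Adj v (u z) →
          (∀ t, t ≠ x → t ≠ y → t ≠ z → ¬ G.Adj v (u t)) →
          7 ≤ ((B z).filter (fun w => ¬ G.Adj v w)).card → False := by
        intro x y z hxy hxz hyz hx4 hy4 hz4 hvx hvy hvz hno' h7
        have hx3 : ((B x).filter (fun w => ¬ G.Adj v w)).card ≤ 3 := by
          by_contra hcon
          have := key67 v y x z (fun h => hxy h.symm) hyz hxz hy4 hx4 hz4 hvu hvy hvx hvz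
            (fun t h1 h2 h3 => hno' t h2 h1 h3) (by omega)
          omega
        have hy3 : ((B y).filter (fun w => ¬ G.Adj v w)).card ≤ 3 := by
          by_contra hcon
          have := key67 v x y z hxy hxz hyz hx4 hy4 hz4 hvu hvx hvy hvz hno' (by omega)
          omega
        exact fanend2 v x y hxy hvx hvy (hbig x hx4) (hbig y hy4) hx3 hy3
      by_cases h7i : 7 ≤ ((B i).filter (fun w => ¬ G.Adj v w)).card
      · exact endcase j k i hjk (fun h => hij h.symm) (fun h => hik h.symm) hj4 hk4 hi4
          hvj hvk hvi (fun t h1 h2 h3 => hno t h3 h1 h2) h7i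
      by_cases h7j : 7 ≤ ((B j).filter (fun w => ¬ G.Adj v w)).card
      · exact endcase i k j hik hij hjk.symm hi4 hk4 hj4 hvi hvk hvj
          (fun t h1 h2 h3 => hno t h1 h3 h2) h7j
      by_cases h7k : 7 ≤ ((B k).filter (fun w => ¬ G.Adj v w)).card
      · exact endcase i j k hij hik hjk hi4 hj4 hk4 hvi hvj hvk hno h7k
      exact fanend3 v i j k hij hik hjk hvi hvj hvk (hbig i hi4) (hbig j hj4) (hbig k hk4)
        (by omega) (by omega) (by omega)
    have huT : ∀ j, u j ∈ T := fun j => Finset.mem_union_left _ (Finset.mem_union_left _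
      (Finset.mem_union_left _ (Finset.mem_union_left _ ((hUfmem _).mpr ⟨j, rfl⟩))))
    have hBT : ∀ t : Fin 5, t ≠ 4 → ∀ b ∈ B t, b ∈ T := by
      intro t ht b hb
      fin_cases t
      · exact Finset.mem_union_left _ (Finset.mem_union_left _ (Finset.mem_union_left _
          (Finset.mem_union_right _ hb)))
      · exact Finset.mem_union_left _ (Finset.mem_union_left _ (Finset.mem_union_right _ hb))
      · exact Finset.mem_union_left _ (Finset.mem_union_right _ hb)
      · exact Finset.mem_union_right _ hb
      · exact absurd rfl ht
    have hWprop : ∀ w ∈ R, w ∉ T ∧ ¬ G.Adj w (u 4) := by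
      intro w hw
      obtain ⟨hwW, hwa⟩ := Finset.mem_filter.mp hw
      exact ⟨(Finset.mem_sdiff.mp hwW).2, hwa⟩
    have hRne : ∀ w ∈ R, ∀ j, w ≠ u j := by
      intro w hw j h
      exact (hWprop w hw).1 (h ▸ huT j)
    have hRB : ∀ x ∈ R, ∀ t : Fin 5, t ≠ 4 → x ∉ B t :=
      fun x hx t ht hxB => (hWprop x hx).1 (hBT t ht x hxB)
    have hclass : ∀ w ∈ R, ∀ t : Fin 5, t ≠ 4 → G.Adj w (u t) := by
      intro w hw
      obtain ⟨hwT, hw4⟩ := hWprop w hw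
      have hwne : ∀ j, w ≠ u j := hRne w hw
      set nb : Finset (Fin 5) := Finset.univ.filter (fun t => G.Adj w (u t)) with hnb
      have hmemnb : ∀ t, t ∈ nb ↔ G.Adj w (u t) := by intro t; simp [hnb]
      have h4nb : (4 : Fin 5) ∉ nb := fun h => hw4 ((hmemnb 4).mp h)
      have hsub : nb ⊆ Finset.univ.erase 4 := by
        intro t ht
        rw [Finset.mem_erase]
        exact ⟨by rintro rfl; exact h4nb ht, Finset.mem_univ t⟩
      have h45 : (Finset.univ.erase (4 : Fin 5)).card = 4 := by decide
      have hnbcard : nb.card ≤ 4 := by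
        have := Finset.card_le_card hsub
        omega
      have hcases : nb.card = 0 ∨ nb.card = 1 ∨ nb.card = 2 ∨ nb.card = 3 ∨ nb.card = 4 := by
        omega
      rcases hcases with h0 | h1 | h2 | h3 | h4
      · exfalso
        have hnone : ∀ t, ¬ G.Adj w (u t) := by
          intro t hadj
          have : t ∈ nb := (hmemnb t).mpr hadj
          rw [Finset.card_eq_zero.mp h0] at this
          exact absurd this (Finset.notMem_empty t)
        refine FanAux.no_six G h6 w (u 0) (u 1) (u 2) (u 3) (u 4)
          (hwne 0) (hwne 1) (hwne 2) (hwne 3) (hwne 4)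
          (fun h => absurd (hu h) (by decide)) (fun h => absurd (hu h) (by decide))
          (fun h => absurd (hu h) (by decide)) (fun h => absurd (hu h) (by decide))
          (fun h => absurd (hu h) (by decide)) (fun h => absurd (hu h) (by decide))
          (fun h => absurd (hu h) (by decide)) (fun h => absurd (hu h) (by decide))
          (fun h => absurd (hu h) (by decide)) (fun h => absurd (hu h) (by decide))
          (hnone 0) (hnone 1) (hnone 2) (hnone 3) (hnone 4)
          (huu (by decide)) (huu (by decide)) (huu (by decide)) (huu (by decide))
          (huu (by decide)) (huu (by decide)) (huu (by decide)) (huu (by decide))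
          (huu (by decide)) (huu (by decide))
      · exfalso
        obtain ⟨t0, ht0⟩ := Finset.card_eq_one.mp h1
        have hadj0 : G.Adj w (u t0) := (hmemnb t0).mp (by rw [ht0]; exact Finset.mem_singleton_self t0)
        have ht04 : t0 ≠ 4 := by rintro rfl; exact h4nb (by rw [ht0]; exact Finset.mem_singleton_self _)
        have hcard1 : nb.card = 1 := h1
        have hwB : w ∈ B t0 := (hBmem t0 w).mpr ⟨⟨hwne, hcard1⟩, hadj0⟩
        exact hwT (hBT t0 ht04 w hwB)
      · exfalso
        obtain ⟨i, j, hij, hnb2⟩ := Finset.card_eq_two.mp h2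
        have hi : G.Adj w (u i) := (hmemnb i).mp (by rw [hnb2]; simp)
        have hj : G.Adj w (u j) := (hmemnb j).mp (by rw [hnb2]; simp)
        have hi4 : i ≠ 4 := by rintro rfl; exact h4nb (by rw [hnb2]; simp)
        have hj4 : j ≠ 4 := by rintro rfl; exact h4nb (by rw [hnb2]; simp)
        refine lemma2 w i j hij hi4 hj4 hwne hi hj ?_
        intro t hti htj hadj
        have : t ∈ nb := (hmemnb t).mpr hadj
        rw [hnb2] at this
        simp only [Finset.mem_insert, Finset.mem_singleton] at this
        tauto
      · exfalso
        obtain ⟨i, j, k, hij, hik, hjk, hnb3⟩ := Finset.card_eq_three.mp h3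
        have hi : G.Adj w (u i) := (hmemnb i).mp (by rw [hnb3]; simp)
        have hj : G.Adj w (u j) := (hmemnb j).mp (by rw [hnb3]; simp)
        have hk : G.Adj w (u k) := (hmemnb k).mp (by rw [hnb3]; simp)
        have hi4 : i ≠ 4 := by rintro rfl; exact h4nb (by rw [hnb3]; simp)
        have hj4 : j ≠ 4 := by rintro rfl; exact h4nb (by rw [hnb3]; simp)
        have hk4 : k ≠ 4 := by rintro rfl; exact h4nb (by rw [hnb3]; simp)
        refine lemma3 w i j k hij hik hjk hi4 hj4 hk4 hwne hi hj hk ?_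
        intro t hti htj htk hadj
        have : t ∈ nb := (hmemnb t).mpr hadj
        rw [hnb3] at this
        simp only [Finset.mem_insert, Finset.mem_singleton] at this
        tauto
      · have heq : nb = Finset.univ.erase 4 := Finset.eq_of_subset_of_card_le hsub (by omega)
        intro t ht
        refine (hmemnb t).mp ?_
        rw [heq, Finset.mem_erase]
        exact ⟨ht, Finset.mem_univ t⟩
    -- endgame
    by_cases hedge : ∃ v1 ∈ R, ∃ v2 ∈ R, v1 ≠ v2 ∧ G.Adj v1 v2
    · obtain ⟨v1, hv1, v2, hv2, hne12, hadj12⟩ := hedge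
      set R2 : Finset V := (R.erase v1).erase v2 with hR2
      have hR2sub : R2 ⊆ R := (Finset.erase_subset _ _).trans (Finset.erase_subset _ _)
      have hR2mem : ∀ w ∈ R2, w ≠ v1 ∧ w ≠ v2 ∧ w ∈ R := by
        intro w hw
        rw [hR2, Finset.mem_erase, Finset.mem_erase] at hw
        exact ⟨hw.2.1, hw.1, hw.2.2⟩
      have hR2card : 3 ≤ R2.card := by
        have e1 : (R.erase v1).card = R.card - 1 := Finset.card_erase_of_mem hv1
        have e2 : ((R.erase v1).erase v2).card = (R.erase v1).card - 1 :=
          Finset.card_erase_of_mem (Finset.mem_erase.mpr ⟨fun h => hne12 h.symm, hv2⟩)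
        rw [hR2]
        omega
      have hpairc : G.IsClique (↑({v1, v2} : Finset V) : Set V) := by
        simp only [Finset.coe_insert, Finset.coe_singleton]
        exact SimpleGraph.isClique_pair.mpr (fun _ => hadj12)
      have hp2 : ({v1, v2} : Finset V).card = 2 := by
        rw [Finset.card_insert_of_notMem (by simp [hne12]), Finset.card_singleton]
      have hp0 : ∀ w ∈ R2, ∀ t : Fin 5, t ≠ 4 → ∀ b ∈ B t, ¬ G.Adj w b := by
        intro w hw t ht b hb hadj
        obtain ⟨hwv1, hwv2, hwR⟩ := hR2mem w hw
        have hwb : w ≠ b := fun h => hRB w hwR t ht (h ▸ hb)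
        have hwbc : G.IsClique (↑({w, b} : Finset V) : Set V) := by
          simp only [Finset.coe_insert, Finset.coe_singleton]
          exact SimpleGraph.isClique_pair.mpr (fun _ => hadj)
        refine FanAux.fan3 G hF (u t) ((B t).erase b) {v1, v2} {w, b} (ℓ-2) 1 1
          ((hBclique t).subset (Finset.coe_subset.mpr (Finset.erase_subset _ _)))
          hpairc hwbc ?_ ?_ ?_ ?_ ?_ ?_ ?_ ?_ ?_ (by omega)
        · intro x hx
          exact (hBadj t x (Finset.erase_subset _ _ hx)).symm
        · intro x hx
          rcases Finset.mem_insert.mp hx with rfl | hx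
          · exact (hclass x hv1 t ht).symm
          · rw [Finset.mem_singleton] at hx
            subst hx
            exact (hclass x hv2 t ht).symm
        · intro x hx
          rcases Finset.mem_insert.mp hx with rfl | hx
          · exact (hclass x hwR t ht).symm
          · rw [Finset.mem_singleton] at hx
            subst hx
            exact (hBadj t x hb).symm
        · rw [Finset.disjoint_left]
          intro x hx hx2
          have hxB : x ∈ B t := Finset.erase_subset _ _ hx
          rcases Finset.mem_insert.mp hx2 with rfl | hx2
          · exact hRB x hv1 t ht hxB
          · rw [Finset.mem_singleton] at hx2
            subst hx2
            exact hRB x hv2 t ht hxB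
        · rw [Finset.disjoint_left]
          intro x hx hx2
          rcases Finset.mem_insert.mp hx2 with rfl | hx2
          · exact hRB x hwR t ht (Finset.erase_subset _ _ hx)
          · rw [Finset.mem_singleton] at hx2
            subst hx2
            exact Finset.notMem_erase x _ hx
        · rw [Finset.disjoint_left]
          intro x hx hx2
          rcases Finset.mem_insert.mp hx with rfl | hx
          · rcases Finset.mem_insert.mp hx2 with heq | hx2
            · exact hwv1 heq.symm
            · rw [Finset.mem_singleton] at hx2
              exact hRB x hv1 t ht (hx2 ▸ hb)
          · rw [Finset.mem_singleton] at hx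
            subst hx
            rcases Finset.mem_insert.mp hx2 with heq | hx2
            · exact hwv2 heq.symm
            · rw [Finset.mem_singleton] at hx2
              exact hRB x hv2 t ht (hx2 ▸ hb)
        · rw [Finset.card_erase_of_mem hb, hbig t ht]
          omega
        · rw [hp2]
        · rw [Finset.card_insert_of_notMem (by simp [hwb]), Finset.card_singleton]
      have hR2ind : ∀ w ∈ R2, ∀ w' ∈ R2, w ≠ w' → ¬ G.Adj w w' := by
        intro w hw w' hw' hne hadj
        obtain ⟨hwv1, hwv2, hwR⟩ := hR2mem w hw
        obtain ⟨hw'v1, hw'v2, hw'R⟩ := hR2mem w' hw'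
        have hwwc : G.IsClique (↑({w, w'} : Finset V) : Set V) := by
          simp only [Finset.coe_insert, Finset.coe_singleton]
          exact SimpleGraph.isClique_pair.mpr (fun _ => hadj)
        refine FanAux.fan3 G hF (u 0) (B 0) {v1, v2} {w, w'} (ℓ-2) 1 1
          (hBclique 0) hpairc hwwc ?_ ?_ ?_ ?_ ?_ ?_ ?_ ?_ ?_ (by omega)
        · intro x hx
          exact (hBadj 0 x hx).symm
        · intro x hx
          rcases Finset.mem_insert.mp hx with rfl | hx
          · exact (hclass x hv1 0 (by decide)).symm
          · rw [Finset.mem_singleton] at hx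
            subst hx
            exact (hclass x hv2 0 (by decide)).symm
        · intro x hx
          rcases Finset.mem_insert.mp hx with rfl | hx
          · exact (hclass x hwR 0 (by decide)).symm
          · rw [Finset.mem_singleton] at hx
            subst hx
            exact (hclass x hw'R 0 (by decide)).symm
        · rw [Finset.disjoint_left]
          intro x hx hx2
          rcases Finset.mem_insert.mp hx2 with rfl | hx2
          · exact hRB x hv1 0 (by decide) hx
          · rw [Finset.mem_singleton] at hx2
            subst hx2
            exact hRB x hv2 0 (by decide) hx
        · rw [Finset.disjoint_left]
          intro x hx hx2
          rcases Finset.mem_insert.mp hx2 with rfl | hx2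
          · exact hRB x hwR 0 (by decide) hx
          · rw [Finset.mem_singleton] at hx2
            subst hx2
            exact hRB x hw'R 0 (by decide) hx
        · rw [Finset.disjoint_left]
          intro x hx hx2
          rcases Finset.mem_insert.mp hx with rfl | hx
          · rcases Finset.mem_insert.mp hx2 with heq | hx2
            · exact hwv1 heq.symm
            · rw [Finset.mem_singleton] at hx2
              exact hw'v1 hx2.symm
          · rw [Finset.mem_singleton] at hx
            subst hx
            rcases Finset.mem_insert.mp hx2 with heq | hx2
            · exact hwv2 heq.symm
            · rw [Finset.mem_singleton] at hx2
              exact hw'v2 hx2.symm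
        · rw [hbig 0 (by decide)]
          omega
        · rw [hp2]
        · rw [Finset.card_insert_of_notMem (by simp [hne]), Finset.card_singleton]
      have hbb : ∃ b ∈ B 0, ∃ b' ∈ B 1, ¬ G.Adj b b' := by
        by_contra hall
        push_neg at hall
        have hcl : G.IsClique (↑(B 0 ∪ B 1) : Set V) := by
          rw [SimpleGraph.isClique_iff]
          intro x hx y hy hxy
          simp only [Finset.coe_union, Set.mem_union, Finset.mem_coe] at hx hy
          rcases hx with hx | hx <;> rcases hy with hy | hy
          · exact hBclique 0 (Finset.mem_coe.mpr hx) (Finset.mem_coe.mpr hy) hxy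
          · exact hall x hx y hy
          · exact (hall y hy x hx).symm
          · exact hBclique 1 (Finset.mem_coe.mpr hx) (Finset.mem_coe.mpr hy) hxy
        have hωc := hω _ hcl
        have hcu : (B 0 ∪ B 1).card = (B 0).card + (B 1).card :=
          Finset.card_union_of_disjoint (hBdisj 0 1 (by decide))
        have hb0 := hbig 0 (by decide)
        have hb1 := hbig 1 (by decide)
        omega
      obtain ⟨b, hb0, b', hb1, hbb'⟩ := hbb
      obtain ⟨S3, hS3sub, hS3card⟩ := Finset.exists_subset_card_eq hR2card
      obtain ⟨v3, v4, v5, h34, h35, h45', hS3⟩ := Finset.card_eq_three.mp hS3card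
      have hm3 : v3 ∈ R2 := hS3sub (by rw [hS3]; simp)
      have hm4 : v4 ∈ R2 := hS3sub (by rw [hS3]; simp)
      have hm5 : v5 ∈ R2 := hS3sub (by rw [hS3]; simp)
      have hR3 : v3 ∈ R := hR2sub hm3
      have hR4' : v4 ∈ R := hR2sub hm4
      have hR5 : v5 ∈ R := hR2sub hm5
      exact FanAux.no_six G h6 (u 4) v3 v4 v5 b b'
        ((hRne v3 hR3 4).symm) ((hRne v4 hR4' 4).symm) ((hRne v5 hR5 4).symm)
        ((hBne 0 b hb0 4).symm) ((hBne 1 b' hb1 4).symm)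
        h34 h35
        (fun h => hRB v3 hR3 0 (by decide) (h ▸ hb0))
        (fun h => hRB v3 hR3 1 (by decide) (h ▸ hb1))
        h45'
        (fun h => hRB v4 hR4' 0 (by decide) (h ▸ hb0))
        (fun h => hRB v4 hR4' 1 (by decide) (h ▸ hb1))
        (fun h => hRB v5 hR5 0 (by decide) (h ▸ hb0))
        (fun h => hRB v5 hR5 1 (by decide) (h ▸ hb1))
        (hBneq (by decide) hb0 hb1)
        (fun h => (hWprop v3 hR3).2 h.symm) (fun h => (hWprop v4 hR4').2 h.symm)
        (fun h => (hWprop v5 hR5).2 h.symm)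
        (fun h => hBonly 0 b hb0 4 (by decide) h.symm)
        (fun h => hBonly 1 b' hb1 4 (by decide) h.symm)
        (hR2ind v3 hm3 v4 hm4 h34) (hR2ind v3 hm3 v5 hm5 h35)
        (hp0 v3 hm3 0 (by decide) b hb0) (hp0 v3 hm3 1 (by decide) b' hb1)
        (hR2ind v4 hm4 v5 hm5 h45')
        (hp0 v4 hm4 0 (by decide) b hb0) (hp0 v4 hm4 1 (by decide) b' hb1)
        (hp0 v5 hm5 0 (by decide) b hb0) (hp0 v5 hm5 1 (by decide) b' hb1)
        hbb'
    · push_neg at hedge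
      have hpair : ((↑(insert (u 4) R) : Set V)).Pairwise (fun a b => ¬ G.Adj a b) := by
        intro x hx y hy hxy
        simp only [Finset.coe_insert, Set.mem_insert_iff, Finset.mem_coe] at hx hy
        rcases hx with rfl | hx
        · rcases hy with rfl | hy
          · exact absurd rfl hxy
          · exact fun h => (hWprop y hy).2 h.symm
        · rcases hy with rfl | hy
          · exact (hWprop x hx).2
          · exact hedge x hx y hy hxy
      have hcard6 := h6 _ hpair
      have hins : (insert (u 4) R).card = R.card + 1 :=
        Finset.card_insert_of_notMem (fun h => hRne _ h 4 rfl)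
      omega
  refine ⟨main, ?_⟩
  have hcover : XS G u 1 ⊆ B 0 ∪ B 1 ∪ B 2 ∪ B 3 ∪ B 4 := by
    intro v hv
    obtain ⟨_, hvne, hc1⟩ := Finset.mem_filter.mp hv
    obtain ⟨a, ha⟩ := Finset.card_eq_one.mp hc1
    have hadj : G.Adj v (u a) := by
      have : a ∈ Finset.univ.filter fun j => G.Adj v (u j) := by rw [ha]; simp
      simpa using this
    have hmem : v ∈ B a := (hBmem a v).mpr ⟨⟨hvne, hc1⟩, hadj⟩
    fin_cases a <;> simp only [Finset.mem_union] <;> tauto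
  have hc1 := Finset.card_le_card hcover
  have hc2 := Finset.card_union_le (B 0 ∪ B 1 ∪ B 2 ∪ B 3) (B 4)
  have hc3 := Finset.card_union_le (B 0 ∪ B 1 ∪ B 2) (B 3)
  have hc4 := Finset.card_union_le (B 0 ∪ B 1) (B 2)
  have hc5 := Finset.card_union_le (B 0) (B 1)
  have h40 : (B 4).card ≤ (B 3).card := hord 3 4 (by decide)
  have h0 := hBcard 0
  have h1 := hBcard 1
  have h2 := hBcard 2
  omega
end

section
/- Suppose |X_{13}| = 2ℓ−3 under the standing hypotheses and let i ∈ {4,5} with |X_{1i}| ≥ 2ℓ−5. Then |X_{1i}| + |X_{2i}| ≤ 2ℓ. -/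
namespace X45aux
set_option linter.unusedSectionVars false
variable {V : Type} [Fintype V] [DecidableEq V] (G : SimpleGraph V) [DecidableRel G.Adj]

/-- coordinates of pairs in `P` are pairwise distinct -/
def PD (P : Finset (V × V)) : Prop :=
  (∀ p ∈ P, p.1 ≠ p.2) ∧
  ∀ p ∈ P, ∀ q ∈ P, p ≠ q → p.1 ≠ q.1 ∧ p.1 ≠ q.2 ∧ p.2 ≠ q.1 ∧ p.2 ≠ q.2

def verts (P : Finset (V × V)) : Finset V := P.image Prod.fst ∪ P.image Prod.snd

lemma mem_verts {P : Finset (V × V)} {a : V} :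
    a ∈ verts P ↔ ∃ p ∈ P, p.1 = a ∨ p.2 = a := by
  simp only [verts, Finset.mem_union, Finset.mem_image]
  constructor
  · rintro (⟨p, hp, rfl⟩ | ⟨p, hp, rfl⟩) <;> exact ⟨p, hp, by simp⟩
  · rintro ⟨p, hp, rfl | rfl⟩
    · exact Or.inl ⟨p, hp, rfl⟩
    · exact Or.inr ⟨p, hp, rfl⟩

lemma verts_union {P Q : Finset (V × V)} : verts (P ∪ Q) = verts P ∪ verts Q := by
  ext x
  simp only [verts, Finset.mem_union, Finset.image_union]
  tauto

lemma pd_union {P Q : Finset (V × V)} (hP : PD P) (hQ : PD Q)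
    (h : Disjoint (verts P) (verts Q)) : PD (P ∪ Q) := by
  have key : ∀ p ∈ P, ∀ q ∈ Q, p.1 ≠ q.1 ∧ p.1 ≠ q.2 ∧ p.2 ≠ q.1 ∧ p.2 ≠ q.2 := by
    intro p hp q hq
    have h1 : p.1 ∈ verts P := mem_verts.2 ⟨p, hp, Or.inl rfl⟩
    have h2 : p.2 ∈ verts P := mem_verts.2 ⟨p, hp, Or.inr rfl⟩
    have g1 : q.1 ∈ verts Q := mem_verts.2 ⟨q, hq, Or.inl rfl⟩
    have g2 : q.2 ∈ verts Q := mem_verts.2 ⟨q, hq, Or.inr rfl⟩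
    refine ⟨fun e => ?_, fun e => ?_, fun e => ?_, fun e => ?_⟩
    · exact (Finset.disjoint_left.1 h) h1 (e ▸ g1)
    · exact (Finset.disjoint_left.1 h) h1 (e ▸ g2)
    · exact (Finset.disjoint_left.1 h) h2 (e ▸ g1)
    · exact (Finset.disjoint_left.1 h) h2 (e ▸ g2)
  constructor
  · intro p hp
    rcases Finset.mem_union.1 hp with h' | h'
    · exact hP.1 p h'
    · exact hQ.1 p h'
  · intro p hp q hq hpq
    rcases Finset.mem_union.1 hp with h1 | h1 <;> rcases Finset.mem_union.1 hq with h2 | h2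
    · exact hP.2 p h1 q h2 hpq
    · exact key p h1 q h2
    · obtain ⟨a, b, c, d⟩ := key q h2 p h1
      exact ⟨a.symm, c.symm, b.symm, d.symm⟩
    · exact hQ.2 p h1 q h2 hpq

lemma card_union_of_vdisj {P Q : Finset (V × V)}
    (h : Disjoint (verts P) (verts Q)) : (P ∪ Q).card = P.card + Q.card := by
  rw [Finset.card_union_of_disjoint]
  rw [Finset.disjoint_left]
  intro p hp hq
  have h1 : p.1 ∈ verts P := mem_verts.2 ⟨p, hp, Or.inl rfl⟩
  have g1 : p.1 ∈ verts Q := mem_verts.2 ⟨p, hq, Or.inl rfl⟩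
  exact (Finset.disjoint_left.1 h) h1 g1

lemma fan_of_pairs {ℓ : ℕ} (c : V) (P : Finset (V × V))
    (hadj : ∀ p ∈ P, G.Adj p.1 p.2)
    (hc : ∀ p ∈ P, G.Adj c p.1 ∧ G.Adj c p.2)
    (hPD : PD P) (hcard : ℓ ≤ P.card) : Contains (fan ℓ) G := by
  obtain ⟨Q, hQP, hQcard⟩ := Finset.exists_subset_card_eq hcard
  have e : Fin ℓ ≃ {x // x ∈ Q} :=
    ((Equiv.cast (congrArg Fin hQcard.symm)).trans (Finset.equivFin Q).symm)
  set ψ : Fin ℓ → V × V := fun a => ((e a : {x // x ∈ Q}) : V × V) with hψ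
  have hψQ : ∀ a, ψ a ∈ Q := fun a => (e a).2
  have hψP : ∀ a, ψ a ∈ P := fun a => hQP (hψQ a)
  have hψinj : Function.Injective ψ := by
    intro a b h
    exact e.injective (Subtype.ext h)
  refine ⟨fun x => match x with
    | none => c
    | some (a, b) => if b = 0 then (ψ a).1 else (ψ a).2, ?_, ?_⟩
  · -- injective
    have hne : ∀ (a : Fin ℓ) (b : Fin 2), (if b = (0 : Fin 2) then (ψ a).1 else (ψ a).2) ≠ c := by
      intro a b
      rcases (hc _ (hψP a)) with ⟨h1, h2⟩
      by_cases hb : b = 0 <;> simp only [hb, if_true, if_false, reduceIte]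
      · exact fun h => G.ne_of_adj h1 h.symm
      · exact fun h => G.ne_of_adj h2 h.symm
    rintro (_ | ⟨a1, b1⟩) (_ | ⟨a2, b2⟩) h
    · rfl
    · exact absurd h.symm (hne a2 b2)
    · exact absurd h (hne a1 b1)
    · simp only at h
      have key : a1 = a2 := by
        by_contra hne12
        have hnePair : ψ a1 ≠ ψ a2 := fun hh => hne12 (hψinj hh)
        obtain ⟨d1, d2, d3, d4⟩ := hPD.2 _ (hψP a1) _ (hψP a2) hnePair
        by_cases e1 : b1 = 0 <;> by_cases e2 : b2 = 0 <;>
          simp only [e1, e2, if_true, if_false, reduceIte] at h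
        · exact d1 h
        · exact d2 h
        · exact d3 h
        · exact d4 h
      subst key
      have hb : b1 = b2 := by
        by_contra hne12
        have hd := hPD.1 _ (hψP a1)
        by_cases e1 : b1 = 0 <;> by_cases e2 : b2 = 0 <;>
          simp only [e1, e2, if_true, if_false, reduceIte] at h
        · exact absurd (e1.trans e2.symm) hne12
        · exact hd h
        · exact hd h.symm
        · omega
      rw [hb]
  · -- homomorphism
    rintro (_ | ⟨a1, b1⟩) (_ | ⟨a2, b2⟩) hadj'
    · exact absurd rfl ((SimpleGraph.fromRel_adj _ _ _).1 hadj').1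
    · rcases hc _ (hψP a2) with ⟨h1, h2⟩
      by_cases e2 : b2 = 0 <;> simp only [e2, if_true, if_false, reduceIte] <;>
        [exact h1; exact h2]
    · rcases hc _ (hψP a1) with ⟨h1, h2⟩
      by_cases e1 : b1 = 0 <;> simp only [e1, if_true, if_false, reduceIte] <;>
        [exact h1.symm; exact h2.symm]
    · rw [fan, SimpleGraph.fromRel_adj] at hadj'
      obtain ⟨hne', hrel⟩ := hadj'
      have ha : a1 = a2 := by
        rcases hrel with (h|h|⟨i,a,b,h1,h2⟩) | (h|h|⟨i,a,b,h1,h2⟩)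
        · exact absurd h (by simp)
        · exact absurd h (by simp)
        · injection h1 with h1'; injection h2 with h2'
          rw [Prod.mk.injEq] at h1' h2'
          exact h1'.1.trans h2'.1.symm
        · exact absurd h (by simp)
        · exact absurd h (by simp)
        · injection h1 with h1'; injection h2 with h2'
          rw [Prod.mk.injEq] at h1' h2'
          exact h2'.1.trans h1'.1.symm
      subst ha
      have hb : b1 ≠ b2 := fun hh => hne' (by rw [hh])
      have hAdj12 := hadj _ (hψP a1)
      by_cases e1 : b1 = 0 <;> by_cases e2 : b2 = 0 <;>
        simp only [e1, e2, if_true, if_false, reduceIte]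
      · exact absurd (e1.trans e2.symm) hb
      · exact hAdj12
      · exact hAdj12.symm
      · exact absurd (by omega : b1 = b2) hb

lemma clique_pairs : ∀ (n : ℕ) (C : Finset V), C.card = n → G.IsClique ↑C →
    ∃ P : Finset (V × V), PD P ∧ P.card = C.card / 2 ∧
      ∀ p ∈ P, p.1 ∈ C ∧ p.2 ∈ C ∧ G.Adj p.1 p.2 := by
  intro n
  induction n using Nat.strong_induction_on with
  | _ n ih =>
    intro C hcard hC
    by_cases h2 : C.card ≤ 1
    · refine ⟨∅, ⟨by simp, by simp⟩, ?_, by simp⟩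
      simp only [Finset.card_empty]
      omega
    · push_neg at h2
      have hC0 : 0 < C.card := by omega
      obtain ⟨a, ha⟩ := Finset.card_pos.1 hC0
      have hC1 : 0 < (C.erase a).card := by rw [Finset.card_erase_of_mem ha]; omega
      obtain ⟨b, hb⟩ := Finset.card_pos.1 hC1
      have hba : b ≠ a := Finset.ne_of_mem_erase hb
      have hbC : b ∈ C := Finset.mem_of_mem_erase hb
      set C' := (C.erase a).erase b with hC'
      have hsub : C' ⊆ C := fun x hx =>
        Finset.mem_of_mem_erase (Finset.mem_of_mem_erase hx)
      have hcC' : C'.card = n - 2 := by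
        rw [hC', Finset.card_erase_of_mem hb, Finset.card_erase_of_mem ha, hcard]; omega
      obtain ⟨P', hPD', hPc', hPm'⟩ := ih (n-2) (by omega) C' hcC'
        (hC.subset (by exact_mod_cast Finset.coe_subset.2 hsub))
      have haC' : a ∉ C' := fun h => (Finset.notMem_erase a C) (Finset.mem_of_mem_erase h)
      have hbC' : b ∉ C' := Finset.notMem_erase b _
      refine ⟨insert (a, b) P', ?_, ?_, ?_⟩
      · constructor
        · intro p hp
          rcases Finset.mem_insert.1 hp with rfl | hp'
          · exact hba.symm
          · exact hPD'.1 p hp'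
        · intro p hp q hq hpq
          have key : ∀ r ∈ P', (a,b).1 ≠ r.1 ∧ (a,b).2 ≠ r.2 ∧ (a,b).1 ≠ r.2 ∧ (a,b).2 ≠ r.1 := by
            intro r hr
            obtain ⟨h1, h2, _⟩ := hPm' r hr
            exact ⟨fun e => haC' (by rw [show a = r.1 from e]; exact h1),
              fun e => hbC' (by rw [show b = r.2 from e]; exact h2),
              fun e => haC' (by rw [show a = r.2 from e]; exact h2),
              fun e => hbC' (by rw [show b = r.1 from e]; exact h1)⟩
          rcases Finset.mem_insert.1 hp with rfl | hp' <;> rcases Finset.mem_insert.1 hq with rfl | hq'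
          · exact absurd rfl hpq
          · obtain ⟨k1, k2, k3, k4⟩ := key q hq'
            exact ⟨k1, k3, k4, k2⟩
          · obtain ⟨k1, k2, k3, k4⟩ := key p hp'
            exact ⟨k1.symm, k4.symm, k3.symm, k2.symm⟩
          · exact hPD'.2 p hp' q hq' hpq
      · have : (a, b) ∉ P' := fun h => haC' (hPm' _ h).1
        rw [Finset.card_insert_of_notMem this, hPc', hcC', hcard]
        omega
      · intro p hp
        rcases Finset.mem_insert.1 hp with rfl | hp'
        · exact ⟨ha, hbC, hC ha hbC (Ne.symm hba)⟩
        · obtain ⟨h1, h2, h3⟩ := hPm' p hp'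
          exact ⟨hsub h1, hsub h2, h3⟩

lemma sdr : ∀ (m : ℕ) (W C : Finset V), W.card = m → (∀ w ∈ W, w ∉ C) →
    ∀ n, W.card ≤ n → (∀ w ∈ W, n ≤ (C.filter (fun x => G.Adj w x)).card) →
    ∃ P : Finset (V × V), PD P ∧ P.card = W.card ∧ P.image Prod.fst = W ∧
      ∀ p ∈ P, p.2 ∈ C ∧ G.Adj p.1 p.2 := by
  intro m
  induction m with
  | zero => intro W C hW _ n _ _
            refine ⟨∅, ⟨by simp, by simp⟩, by simp [hW, Finset.card_eq_zero.1 hW], ?_, by simp⟩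
            rw [Finset.card_eq_zero.1 hW]; simp
  | succ m ih =>
    intro W C hW hdisj n hn hnb
    have hW0 : 0 < W.card := by omega
    obtain ⟨w, hw⟩ := Finset.card_pos.1 hW0
    set W' := W.erase w with hW'
    have hWc' : W'.card = m := by rw [hW', Finset.card_erase_of_mem hw, hW]; omega
    obtain ⟨P', hPD', hPc', hPfst', hPm'⟩ := ih W' C (hWc')
      (fun x hx => hdisj x (Finset.mem_of_mem_erase hx)) n (by omega)
      (fun x hx => hnb x (Finset.mem_of_mem_erase hx))
    have hused : (P'.image Prod.snd).card ≤ m := le_trans (Finset.card_image_le) (by rw [hPc', hWc'])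
    have hx : ((C.filter (fun x => G.Adj w x)) \ (P'.image Prod.snd)).card > 0 := by
      have h1 := hnb w hw
      have := Finset.le_card_sdiff (P'.image Prod.snd) (C.filter (fun x => G.Adj w x))
      omega
    obtain ⟨x, hxmem⟩ := Finset.card_pos.1 hx
    obtain ⟨hxC, hxused⟩ := Finset.mem_sdiff.1 hxmem
    have hxC' : x ∈ C := (Finset.mem_filter.1 hxC).1
    have hxadj : G.Adj w x := (Finset.mem_filter.1 hxC).2
    have hwx : w ≠ x := fun e => hdisj w hw (e ▸ hxC')
    have hwP' : ∀ p ∈ P', p.1 ≠ w ∧ p.2 ≠ w ∧ p.1 ≠ x ∧ p.2 ≠ x := by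
      intro p hp
      have h1 : p.1 ∈ W' := hPfst' ▸ Finset.mem_image_of_mem Prod.fst hp
      have h2 : p.2 ∈ C := (hPm' p hp).1
      refine ⟨fun e => (Finset.ne_of_mem_erase h1) e, fun e => hdisj w hw (e ▸ h2),
        fun e => hdisj p.1 (Finset.mem_of_mem_erase h1) (e ▸ hxC'), fun e => hxused ?_⟩
      exact Finset.mem_image.2 ⟨p, hp, e⟩
    have hnotmem : (w, x) ∉ P' := fun h => (hwP' _ h).1 rfl
    refine ⟨insert (w, x) P', ?_, ?_, ?_, ?_⟩
    · constructor
      · intro p hp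
        rcases Finset.mem_insert.1 hp with rfl | hp'
        · exact hwx
        · exact hPD'.1 p hp'
      · intro p hp q hq hpq
        rcases Finset.mem_insert.1 hp with rfl | hp' <;> rcases Finset.mem_insert.1 hq with rfl | hq'
        · exact absurd rfl hpq
        · obtain ⟨k1, k2, k3, k4⟩ := hwP' q hq'
          exact ⟨k1.symm, k2.symm, k3.symm, k4.symm⟩
        · obtain ⟨k1, k2, k3, k4⟩ := hwP' p hp'
          exact ⟨k1, k3, k2, k4⟩
        · exact hPD'.2 p hp' q hq' hpq
    · rw [Finset.card_insert_of_notMem hnotmem, hPc', hWc', hW]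
    · rw [Finset.image_insert]
      rw [hPfst']
      simp only [hW']
      exact Finset.insert_erase hw
    · intro p hp
      rcases Finset.mem_insert.1 hp with rfl | hp'
      · exact ⟨hxC', hxadj⟩
      · exact hPm' p hp'

lemma six
    (h6 : ∀ s : Finset V, (↑s : Set V).Pairwise (fun a b => ¬ G.Adj a b) → s.card ≤ 5)
    (a b c d e f : V)
    (dab : a ≠ b) (dac : a ≠ c) (dad : a ≠ d) (dae : a ≠ e) (daf : a ≠ f)
    (dbc : b ≠ c) (dbd : b ≠ d) (dbe : b ≠ e) (dbf : b ≠ f)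
    (dcd : c ≠ d) (dce : c ≠ e) (dcf : c ≠ f)
    (dde : d ≠ e) (ddf : d ≠ f) (def' : e ≠ f)
    (nab : ¬G.Adj a b) (nac : ¬G.Adj a c) (nad : ¬G.Adj a d) (nae : ¬G.Adj a e)
    (naf : ¬G.Adj a f)
    (nbc : ¬G.Adj b c) (nbd : ¬G.Adj b d) (nbe : ¬G.Adj b e) (nbf : ¬G.Adj b f)
    (ncd : ¬G.Adj c d) (nce : ¬G.Adj c e) (ncf : ¬G.Adj c f)
    (nde : ¬G.Adj d e) (ndf : ¬G.Adj d f) (nef : ¬G.Adj e f) : False := by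
  have mab : ¬G.Adj b a := fun h => nab h.symm
  have mac : ¬G.Adj c a := fun h => nac h.symm
  have mad : ¬G.Adj d a := fun h => nad h.symm
  have mae : ¬G.Adj e a := fun h => nae h.symm
  have maf : ¬G.Adj f a := fun h => naf h.symm
  have mbc : ¬G.Adj c b := fun h => nbc h.symm
  have mbd : ¬G.Adj d b := fun h => nbd h.symm
  have mbe : ¬G.Adj e b := fun h => nbe h.symm
  have mbf : ¬G.Adj f b := fun h => nbf h.symm
  have mcd : ¬G.Adj d c := fun h => ncd h.symm
  have mce : ¬G.Adj e c := fun h => nce h.symm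
  have mcf : ¬G.Adj f c := fun h => ncf h.symm
  have mde : ¬G.Adj e d := fun h => nde h.symm
  have mdf : ¬G.Adj f d := fun h => ndf h.symm
  have mef : ¬G.Adj f e := fun h => nef h.symm
  have hcard : ({a,b,c,d,e,f} : Finset V).card = 6 := by
    rw [Finset.card_insert_of_notMem (by simp [dab, dac, dad, dae, daf]),
        Finset.card_insert_of_notMem (by simp [dbc, dbd, dbe, dbf]),
        Finset.card_insert_of_notMem (by simp [dcd, dce, dcf]),
        Finset.card_insert_of_notMem (by simp [dde, ddf]),
        Finset.card_insert_of_notMem (by simp [def']),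
        Finset.card_singleton]
  have hp : (↑({a,b,c,d,e,f} : Finset V) : Set V).Pairwise (fun x y => ¬ G.Adj x y) := by
    intro x hx y hy hxy
    simp only [Finset.coe_insert, Finset.coe_singleton, Set.mem_insert_iff,
      Set.mem_singleton_iff] at hx hy
    rcases hx with rfl|rfl|rfl|rfl|rfl|rfl <;> rcases hy with rfl|rfl|rfl|rfl|rfl|rfl <;>
      first | exact absurd rfl hxy | assumption
  have := h6 _ hp
  omega

lemma X1_nadj {u : Fin 5 → V} {j a : Fin 5} {y : V} (hy : y ∈ XSi G u 1 j) (hne : a ≠ j) :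
    ¬ G.Adj y (u a) := by
  obtain ⟨hy1, hy2⟩ := Finset.mem_filter.1 hy
  obtain ⟨-, ⟨-, hcard⟩⟩ := Finset.mem_filter.1 hy1
  intro hadj
  obtain ⟨c, hc⟩ := Finset.card_eq_one.1 hcard
  have h1 : j ∈ Finset.univ.filter fun k => G.Adj y (u k) := by
    simp [hy2]
  have h2 : a ∈ Finset.univ.filter fun k => G.Adj y (u k) := by
    simp [hadj]
  rw [hc] at h1 h2
  simp only [Finset.mem_singleton] at h1 h2
  exact hne (h2.trans h1.symm)

lemma X2_second {u : Fin 5 → V} {i : Fin 5} {v : V} (hv : v ∈ XSi G u 2 i) :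
    ∃ j, j ≠ i ∧ G.Adj v (u j) ∧ ∀ a, G.Adj v (u a) → a = i ∨ a = j := by
  obtain ⟨hv1, hv2⟩ := Finset.mem_filter.1 hv
  obtain ⟨-, ⟨-, hcard⟩⟩ := Finset.mem_filter.1 hv1
  obtain ⟨a, b, hab, hset⟩ := Finset.card_eq_two.1 hcard
  have hi : i ∈ Finset.univ.filter fun k => G.Adj v (u k) := by simp [hv2]
  rw [hset] at hi
  simp only [Finset.mem_insert, Finset.mem_singleton] at hi
  rcases hi with rfl | rfl
  · refine ⟨b, hab.symm, ?_, ?_⟩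
    · have : b ∈ ({i, b} : Finset (Fin 5)) := by simp
      rw [← hset] at this
      exact (Finset.mem_filter.1 this).2
    · intro k hk
      have : k ∈ ({i, b} : Finset (Fin 5)) := by rw [← hset]; simp [hk]
      simpa using this
  · refine ⟨a, hab, ?_, ?_⟩
    · have : a ∈ ({a, i} : Finset (Fin 5)) := by simp
      rw [← hset] at this
      exact (Finset.mem_filter.1 this).2
    · intro k hk
      have : k ∈ ({a, i} : Finset (Fin 5)) := by rw [← hset]; simp [hk]
      simp only [Finset.mem_insert, Finset.mem_singleton] at this
      tauto

lemma XSi_ne_u {u : Fin 5 → V} {s : ℕ} {i a : Fin 5} {v : V} (hv : v ∈ XSi G u s i) :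
    v ≠ u a := by
  obtain ⟨hv1, -⟩ := Finset.mem_filter.1 hv
  exact (Finset.mem_filter.1 hv1).2.1 a

lemma XSi_card_ne {u : Fin 5 → V} {s t : ℕ} {i j : Fin 5} {v : V}
    (hv : v ∈ XSi G u s i) (hw : v ∈ XSi G u t j) : s = t := by
  obtain ⟨hv1, -⟩ := Finset.mem_filter.1 hv
  obtain ⟨hw1, -⟩ := Finset.mem_filter.1 hw
  have h1 := (Finset.mem_filter.1 hv1).2.2
  have h2 := (Finset.mem_filter.1 hw1).2.2
  rw [← h1, ← h2]

lemma X1_disj {u : Fin 5 → V} {i j : Fin 5} (hij : i ≠ j) {v : V}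
    (hv : v ∈ XSi G u 1 i) (hw : v ∈ XSi G u 1 j) : False := by
  have := X1_nadj G hw hij
  exact this (Finset.mem_filter.1 hv).2

lemma XSi_adj {u : Fin 5 → V} {s : ℕ} {i : Fin 5} {v : V} (hv : v ∈ XSi G u s i) :
    G.Adj v (u i) := (Finset.mem_filter.1 hv).2

lemma pd_singleton (p : V × V) (h : p.1 ≠ p.2) : PD {p} := by
  constructor
  · intro q hq
    rw [Finset.mem_singleton] at hq
    subst hq; exact h
  · intro q hq r hr hqr
    rw [Finset.mem_singleton] at hq hr
    subst hq; subst hr; exact absurd rfl hqr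

lemma verts_singleton (p : V × V) : verts {p} = {p.1, p.2} := by
  rw [verts, Finset.image_singleton, Finset.image_singleton, Finset.insert_eq]

/-- main fan-building engine at centre `u i`: `B` edges inside `X2i`, an SDR from
`T ⊆ X2i` into `X1i`, plus a pairing of the rest of the clique `X1i`. -/
lemma buildFan {ℓ : ℕ} (hF : ¬ Contains (fan ℓ) G) (u : Fin 5 → V) (i : Fin 5)
    (hIcl : G.IsClique (↑(XSi G u 1 i) : Set V))
    (B : Finset (V × V)) (T : Finset V) (n : ℕ)
    (hB : ∀ p ∈ B, p.1 ∈ XSi G u 2 i ∧ p.2 ∈ XSi G u 2 i ∧ G.Adj p.1 p.2)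
    (hBPD : PD B)
    (hT : T ⊆ XSi G u 2 i) (hTB : ∀ w ∈ T, w ∉ verts B)
    (hq : ∀ w ∈ T, n ≤ ((XSi G u 1 i).filter (fun x => G.Adj w x)).card)
    (hTn : T.card ≤ n)
    (hcount : ℓ ≤ B.card + T.card + ((XSi G u 1 i).card - T.card) / 2) : False := by
  set I := XSi G u 1 i with hI
  set W := XSi G u 2 i with hW
  have hWI : ∀ v ∈ W, v ∉ I := by
    intro v hv hvI
    have := XSi_card_ne G hvI hv
    omega
  obtain ⟨P1, hP1PD, hP1c, hP1fst, hP1m⟩ := sdr G T.card T I rfl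
    (fun w hw => hWI w (hT hw)) n hTn hq
  set used := P1.image Prod.snd with huse
  have husedI : used ⊆ I := by
    intro x hx
    obtain ⟨p, hp, rfl⟩ := Finset.mem_image.1 hx
    exact (hP1m p hp).1
  have husedc : used.card = T.card := by
    rw [huse, Finset.card_image_of_injOn, hP1c]
    intro p hp q hq hpq
    by_contra hne
    exact (hP1PD.2 p hp q hq hne).2.2.2 hpq
  obtain ⟨P2, hP2PD, hP2c, hP2m⟩ := clique_pairs G (I \ used).card (I \ used) rfl
    (hIcl.subset (by exact_mod_cast Finset.coe_subset.2 (Finset.sdiff_subset)))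
  have hsd : (I \ used).card = I.card - T.card := by
    rw [Finset.card_sdiff_of_subset husedI, husedc]
  -- verts containments
  have hvB : ∀ x ∈ verts B, x ∈ W := by
    intro x hx
    obtain ⟨p, hp, h | h⟩ := mem_verts.1 hx
    · exact h ▸ (hB p hp).1
    · exact h ▸ (hB p hp).2.1
  have hvP1 : ∀ x ∈ verts P1, x ∈ T ∪ used := by
    intro x hx
    obtain ⟨p, hp, h | h⟩ := mem_verts.1 hx
    · exact Finset.mem_union_left _ (h ▸ hP1fst ▸ Finset.mem_image_of_mem Prod.fst hp)
    · exact Finset.mem_union_right _ (h ▸ Finset.mem_image_of_mem Prod.snd hp)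
  have hvP2 : ∀ x ∈ verts P2, x ∈ I \ used := by
    intro x hx
    obtain ⟨p, hp, h | h⟩ := mem_verts.1 hx
    · exact h ▸ (hP2m p hp).1
    · exact h ▸ (hP2m p hp).2.1
  have d1 : Disjoint (verts B) (verts P1) := by
    rw [Finset.disjoint_left]
    intro x hx hx1
    rcases Finset.mem_union.1 (hvP1 x hx1) with h | h
    · exact hTB x h hx
    · exact hWI x (hvB x hx) (husedI h)
  have d2 : Disjoint (verts B) (verts P2) := by
    rw [Finset.disjoint_left]
    intro x hx hx2
    exact hWI x (hvB x hx) (Finset.mem_sdiff.1 (hvP2 x hx2)).1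
  have d3 : Disjoint (verts P1) (verts P2) := by
    rw [Finset.disjoint_left]
    intro x hx hx2
    obtain ⟨hxI, hxnu⟩ := Finset.mem_sdiff.1 (hvP2 x hx2)
    rcases Finset.mem_union.1 (hvP1 x hx) with h | h
    · exact hWI x (hT h) hxI
    · exact hxnu h
  have d12_3 : Disjoint (verts (B ∪ P1)) (verts P2) := by
    rw [verts_union, Finset.disjoint_union_left]
    exact ⟨d2, d3⟩
  set P := (B ∪ P1) ∪ P2 with hP
  have hPDall : PD P := pd_union (pd_union hBPD hP1PD d1) hP2PD d12_3
  have hPcard : ℓ ≤ P.card := by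
    rw [hP, card_union_of_vdisj d12_3, card_union_of_vdisj d1, hP1c, hP2c, hsd]
    omega
  have hadj : ∀ p ∈ P, G.Adj p.1 p.2 := by
    intro p hp
    rcases Finset.mem_union.1 hp with hp' | hp'
    · rcases Finset.mem_union.1 hp' with h | h
      · exact (hB p h).2.2
      · exact (hP1m p h).2
    · exact (hP2m p hp').2.2
  have hmemWI : ∀ x, x ∈ verts P → G.Adj (u i) x := by
    intro x hx
    have hx' : x ∈ verts B ∪ verts P1 ∪ verts P2 := by
      rw [← verts_union, ← verts_union]
      exact hx
    have hWadj : x ∈ W → G.Adj (u i) x := fun h => (XSi_adj G h).symm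
    have hIadj : x ∈ I → G.Adj (u i) x := fun h => (XSi_adj G h).symm
    rcases Finset.mem_union.1 hx' with h' | h'
    · rcases Finset.mem_union.1 h' with h | h
      · exact hWadj (hvB x h)
      · rcases Finset.mem_union.1 (hvP1 x h) with h'' | h''
        · exact hWadj (hT h'')
        · exact hIadj (husedI h'')
    · exact hIadj (Finset.mem_sdiff.1 (hvP2 x h')).1
  have hc : ∀ p ∈ P, G.Adj (u i) p.1 ∧ G.Adj (u i) p.2 :=
    fun p hp => ⟨hmemWI p.1 (mem_verts.2 ⟨p, hp, Or.inl rfl⟩),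
      hmemWI p.2 (mem_verts.2 ⟨p, hp, Or.inr rfl⟩)⟩
  exact hF (fan_of_pairs G (u i) P hadj hc hPDall hPcard)

end X45aux
open X45aux in
theorem X45_estimate {V : Type} [Fintype V] [DecidableEq V] (ℓ : ℕ) (hℓ : 6 ≤ ℓ)
    (G : SimpleGraph V) [DecidableRel G.Adj]
    (hcard : Fintype.card V = 10 * ℓ + 1)
    (hF : ¬ Contains (fan ℓ) G)
    (u : Fin 5 → V) (hu : Function.Injective u)
    (huI : (Set.range u).Pairwise fun a b => ¬ G.Adj a b)
    (h6 : ∀ s : Finset V, (↑s : Set V).Pairwise (fun a b => ¬ G.Adj a b) → s.card ≤ 5)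
    (hΔ : ∀ v : V, G.degree v ≤ 2 * ℓ + 3)
    (hω : ∀ s : Finset V, G.IsClique (↑s : Set V) → s.card ≤ 2 * ℓ - 2)
    (hcliq : ∀ m : Fin 5, G.IsClique (↑(insert (u m) (XSi G u 1 m)) : Set V))
    (hord : ∀ i j : Fin 5, i ≤ j → (XSi G u 1 j).card ≤ (XSi G u 1 i).card)
    (h13 : (XSi G u 1 2).card = 2 * ℓ - 3)
    (i : Fin 5) (hi : i = 3 ∨ i = 4)
    (hXi : 2 * ℓ - 5 ≤ (XSi G u 1 i).card) :
    (XSi G u 1 i).card + (XSi G u 2 i).card ≤ 2 * ℓ := by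
  classical
  by_contra hcon
  push_neg at hcon
  set I := XSi G u 1 i with hIdef
  set W := XSi G u 2 i with hWdef
  have hiu : u i ∉ I := fun h => (XSi_ne_u G h) rfl
  have hIcl : G.IsClique (↑I : Set V) :=
    (hcliq i).subset (by exact_mod_cast Finset.coe_subset.2 (Finset.subset_insert _ _))
  have hkup : I.card + 3 ≤ 2 * ℓ := by
    have h1 := hω _ (hcliq i)
    rw [Finset.card_insert_of_notMem hiu] at h1
    omega
  have hklo : 2 * ℓ ≤ I.card + 5 := by omega
  obtain ⟨t, ht3, ht5, htk⟩ : ∃ t, 3 ≤ t ∧ t ≤ 5 ∧ I.card + t = 2 * ℓ :=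
    ⟨2 * ℓ - I.card, by omega, by omega, by omega⟩
  have hm : t + 1 ≤ W.card := by omega
  have hWI : ∀ v ∈ W, v ∉ I := by
    intro v hv hvI
    have := XSi_card_ne G hvI hv
    omega
  have hnadj_uu : ∀ a b : Fin 5, a ≠ b → ¬ G.Adj (u a) (u b) := by
    intro a b hab
    exact huI (Set.mem_range_self a) (Set.mem_range_self b) (fun e => hab (hu e))
  -- Step: vertices of `W` whose second neighbour has low index have ≥ |I| - 3
  -- neighbours in `I`.
  have lowStep : ∀ v ∈ W, ∀ j : Fin 5, G.Adj v (u j) →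
      (∀ a, G.Adj v (u a) → a = i ∨ a = j) → j ≠ i → j.val ≤ 2 →
      I.card ≤ (I.filter (fun x => G.Adj v x)).card + 3 := by
    intro v hvW j hjadj hjuniq hji hjlow
    set J := XSi G u 1 j with hJdef
    have hju : u j ∉ J := fun h => (XSi_ne_u G h) rfl
    have hJcard : J.card + 3 = 2 * ℓ := by
      have hle : j ≤ 2 := by
        rw [Fin.le_def]
        exact hjlow
      have h1 := hord j 2 hle
      have h2 := hω _ (hcliq j)
      rw [show XSi G u 1 j = J from rfl] at h1 h2
      rw [Finset.card_insert_of_notMem hju] at h2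
      rw [h13] at h1
      omega
    have hvnJ : v ∉ J := by
      intro h
      have := XSi_card_ne G h hvW
      omega
    have hvuj : v ≠ u j := XSi_ne_u G hvW
    -- some vertex of J is not adjacent to v
    have hy : ∃ y ∈ J, ¬ G.Adj v y := by
      by_contra h'
      push_neg at h'
      have hclv : G.IsClique (↑(insert v (insert (u j) J)) : Set V) := by
        rw [Finset.coe_insert]
        refine (hcliq j).insert ?_
        intro b hb hbv
        rcases Finset.mem_insert.1 (Finset.mem_coe.1 hb) with rfl | hbJ
        · exact hjadj
        · exact h' b hbJ
      have hc2 := hω _ hclv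
      rw [Finset.card_insert_of_notMem (by
            intro h
            rcases Finset.mem_insert.1 h with h' | h'
            · exact hvuj h'
            · exact hvnJ h'),
          Finset.card_insert_of_notMem hju] at hc2
      omega
    obtain ⟨y, hyJ, hynv⟩ := hy
    have hyuj : G.Adj y (u j) := XSi_adj G hyJ
    -- y is adjacent to every non-neighbour of v inside I
    have hyx : ∀ x ∈ I, ¬ G.Adj v x → G.Adj y x := by
      intro x hxI hnvx
      by_contra hyxn
      have hAcard : ((Finset.univ : Finset (Fin 5)) \ {i, j}).card = 3 := by
        rw [Finset.card_sdiff_of_subset (Finset.subset_univ _), Finset.card_univ,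
          Finset.card_insert_of_notMem (by simp [Ne.symm hji]), Finset.card_singleton]
        simp
      obtain ⟨a1, a2, a3, h12, h13', h23, hA⟩ := Finset.card_eq_three.1 hAcard
      have hmem : ∀ c : Fin 5, c ∈ ({a1, a2, a3} : Finset (Fin 5)) → c ≠ i ∧ c ≠ j := by
        intro c hc
        have h' : c ∈ (Finset.univ : Finset (Fin 5)) \ {i, j} := hA ▸ hc
        have h'' := (Finset.mem_sdiff.1 h').2
        simp only [Finset.mem_insert, Finset.mem_singleton, not_or] at h''
        exact h''
      obtain ⟨h1i, h1j⟩ := hmem a1 (by simp)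
      obtain ⟨h2i, h2j⟩ := hmem a2 (by simp)
      obtain ⟨h3i, h3j⟩ := hmem a3 (by simp)
      have hva : ∀ c : Fin 5, c ≠ i → c ≠ j → ¬ G.Adj v (u c) := by
        intro c hc1 hc2 hadj
        rcases hjuniq c hadj with rfl | rfl
        · exact hc1 rfl
        · exact hc2 rfl
      exact six G h6 y v x (u a1) (u a2) (u a3)
        (fun e => by have := XSi_card_ne G (e ▸ hyJ) hvW; omega)
        (fun e => X1_disj G hji (e ▸ hyJ) hxI)
        (XSi_ne_u G hyJ) (XSi_ne_u G hyJ) (XSi_ne_u G hyJ)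
        (fun e => hWI v hvW (e ▸ hxI))
        (XSi_ne_u G hvW) (XSi_ne_u G hvW) (XSi_ne_u G hvW)
        (XSi_ne_u G hxI) (XSi_ne_u G hxI) (XSi_ne_u G hxI)
        (fun e => h12 (hu e)) (fun e => h13' (hu e)) (fun e => h23 (hu e))
        (fun h => hynv h.symm) hyxn
        (X1_nadj G hyJ h1j) (X1_nadj G hyJ h2j) (X1_nadj G hyJ h3j)
        hnvx
        (hva a1 h1i h1j) (hva a2 h2i h2j) (hva a3 h3i h3j)
        (X1_nadj G hxI h1i) (X1_nadj G hxI h2i) (X1_nadj G hxI h3i)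
        (hnadj_uu a1 a2 h12) (hnadj_uu a1 a3 h13') (hnadj_uu a2 a3 h23)
    -- now build a fan at y unless v has ≥ |I| - 3 neighbours in I
    by_contra hq3
    push_neg at hq3
    set C1 := insert (u j) (J.erase y) with hC1def
    set C2 := I.filter (fun x => ¬ G.Adj v x) with hC2def
    have hyy : y ≠ u j := XSi_ne_u G hyJ
    have hujJe : u j ∉ J.erase y := fun h => (XSi_ne_u G (Finset.mem_of_mem_erase h)) rfl
    have hC1card : C1.card + 3 = 2 * ℓ := by
      rw [hC1def, Finset.card_insert_of_notMem hujJe, Finset.card_erase_of_mem hyJ]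
      omega
    have hC2card : (I.filter (fun x => G.Adj v x)).card + C2.card = I.card := by
      rw [hC2def]
      exact Finset.card_filter_add_card_filter_not _
    have hC1cl : G.IsClique (↑C1 : Set V) := by
      refine (hcliq j).subset ?_
      rw [hC1def]
      exact_mod_cast Finset.coe_subset.2 (Finset.insert_subset_insert _ (Finset.erase_subset _ _))
    have hC2cl : G.IsClique (↑C2 : Set V) := by
      refine hIcl.subset ?_
      rw [hC2def]
      exact_mod_cast Finset.coe_subset.2 (Finset.filter_subset _ _)
    have hC1adj : ∀ z ∈ C1, G.Adj y z := by
      intro z hz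
      rcases Finset.mem_insert.1 hz with rfl | hz'
      · exact hyuj
      · refine (hcliq j) ?_ ?_ (Finset.ne_of_mem_erase hz').symm
        · exact Finset.mem_coe.2 (Finset.mem_insert_of_mem hyJ)
        · exact Finset.mem_coe.2 (Finset.mem_insert_of_mem (Finset.mem_of_mem_erase hz'))
    have hC2adj : ∀ z ∈ C2, G.Adj y z := by
      intro z hz
      obtain ⟨hzI, hznv⟩ := Finset.mem_filter.1 hz
      exact hyx z hzI hznv
    obtain ⟨P1, hP1PD, hP1c, hP1m⟩ := clique_pairs G C1.card C1 rfl hC1cl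
    obtain ⟨P2, hP2PD, hP2c, hP2m⟩ := clique_pairs G C2.card C2 rfl hC2cl
    have hC12 : ∀ z, z ∈ C1 → z ∈ C2 → False := by
      intro z hz1 hz2
      have hzI : z ∈ I := (Finset.mem_filter.1 hz2).1
      rcases Finset.mem_insert.1 hz1 with rfl | hz'
      · exact (XSi_ne_u G hzI) rfl
      · exact X1_disj G hji (Finset.mem_of_mem_erase hz') hzI
    have hvd : Disjoint (verts P1) (verts P2) := by
      rw [Finset.disjoint_left]
      intro z hz1 hz2
      obtain ⟨p, hp, h | h⟩ := mem_verts.1 hz1 <;>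
        obtain ⟨p', hp', h' | h'⟩ := mem_verts.1 hz2
      · exact hC12 z (h ▸ (hP1m p hp).1) (h' ▸ (hP2m p' hp').1)
      · exact hC12 z (h ▸ (hP1m p hp).1) (h' ▸ (hP2m p' hp').2.1)
      · exact hC12 z (h ▸ (hP1m p hp).2.1) (h' ▸ (hP2m p' hp').1)
      · exact hC12 z (h ▸ (hP1m p hp).2.1) (h' ▸ (hP2m p' hp').2.1)
    have hPD12 : PD (P1 ∪ P2) := pd_union hP1PD hP2PD hvd
    have hcard12 : ℓ ≤ (P1 ∪ P2).card := by
      rw [card_union_of_vdisj hvd, hP1c, hP2c]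
      omega
    refine hF (fan_of_pairs G y (P1 ∪ P2) ?_ ?_ hPD12 hcard12)
    · intro p hp
      rcases Finset.mem_union.1 hp with h | h
      · exact (hP1m p h).2.2
      · exact (hP2m p h).2.2
    · intro p hp
      rcases Finset.mem_union.1 hp with h | h
      · exact ⟨hC1adj _ (hP1m p h).1, hC1adj _ (hP1m p h).2.1⟩
      · exact ⟨hC2adj _ (hP2m p h).1, hC2adj _ (hP2m p h).2.1⟩
  -- good vertices: at most t-1 of them
  set Gd := W.filter (fun v => t ≤ (I.filter (fun x => G.Adj v x)).card) with hGddef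
  have hGdW : Gd ⊆ W := Finset.filter_subset _ _
  have hGdcard : Gd.card + 1 ≤ t := by
    by_contra h'
    push_neg at h'
    obtain ⟨T, hTsub, hTcard⟩ := Finset.exists_subset_card_eq (show t ≤ Gd.card by omega)
    refine buildFan G hF u i hIcl ∅ T t (by simp) ⟨by simp, by simp⟩
      (hTsub.trans hGdW) (by simp [verts]) ?_ (by omega) ?_
    · intro w hw
      exact (Finset.mem_filter.1 (hTsub hw)).2
    · show ℓ ≤ (∅ : Finset (V × V)).card + T.card + (I.card - T.card) / 2
      simp only [Finset.card_empty]
      omega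
  -- generic six-set contradiction with two W vertices of exceptional type
  have sixWWI : ∀ v ∈ W, ∀ w ∈ W, ∀ x ∈ I, ¬ G.Adj v w → ¬ G.Adj v x → ¬ G.Adj w x →
      v ≠ w →
      (∀ a : Fin 5, a.val ≤ 2 → ¬ G.Adj v (u a)) →
      (∀ a : Fin 5, a.val ≤ 2 → ¬ G.Adj w (u a)) → False := by
    intro v hv w hw x hx hnvw hnvx hnwx hvw hvE hwE
    have h0i : (0 : Fin 5) ≠ i := by rcases hi with rfl | rfl <;> decide
    have h1i : (1 : Fin 5) ≠ i := by rcases hi with rfl | rfl <;> decide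
    have h2i : (2 : Fin 5) ≠ i := by rcases hi with rfl | rfl <;> decide
    exact six G h6 v w x (u 0) (u 1) (u 2)
      hvw (fun e => hWI v hv (e ▸ hx)) (XSi_ne_u G hv) (XSi_ne_u G hv) (XSi_ne_u G hv)
      (fun e => hWI w hw (e ▸ hx)) (XSi_ne_u G hw) (XSi_ne_u G hw) (XSi_ne_u G hw)
      (XSi_ne_u G hx) (XSi_ne_u G hx) (XSi_ne_u G hx)
      (fun e => (by decide : ¬ ((0 : Fin 5) = 1)) (hu e))
      (fun e => (by decide : ¬ ((0 : Fin 5) = 2)) (hu e))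
      (fun e => (by decide : ¬ ((1 : Fin 5) = 2)) (hu e))
      hnvw hnvx (hvE 0 (by decide)) (hvE 1 (by decide)) (hvE 2 (by decide))
      hnwx (hwE 0 (by decide)) (hwE 1 (by decide)) (hwE 2 (by decide))
      (X1_nadj G hx h0i) (X1_nadj G hx h1i) (X1_nadj G hx h2i)
      (hnadj_uu 0 1 (by decide)) (hnadj_uu 0 2 (by decide)) (hnadj_uu 1 2 (by decide))
  by_cases hk2 : ℓ + 2 ≤ I.card
  · -- main case : every non-good vertex is exceptional, and they form a clique
    set Bd := W \ Gd with hBddef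
    have hBdcard : Gd.card + Bd.card = W.card := by
      rw [hBddef, Finset.card_sdiff_of_subset hGdW]
      have := Finset.card_le_card hGdW
      omega
    have hEtype : ∀ v ∈ Bd, (∀ a : Fin 5, a.val ≤ 2 → ¬ G.Adj v (u a)) ∧
        (I.filter (fun x => G.Adj v x)).card + 1 ≤ t := by
      intro v hv
      obtain ⟨hvW, hvnGd⟩ := Finset.mem_sdiff.1 hv
      have hqv : (I.filter (fun x => G.Adj v x)).card + 1 ≤ t := by
        by_contra h'
        push_neg at h'
        exact hvnGd (Finset.mem_filter.2 ⟨hvW, by omega⟩)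
      obtain ⟨j, hji, hjadj, hjuniq⟩ := X2_second G hvW
      by_cases hjlow : j.val ≤ 2
      · have := lowStep v hvW j hjadj hjuniq hji hjlow
        omega
      · refine ⟨?_, hqv⟩
        intro a ha hadj
        rcases hjuniq a hadj with rfl | rfl
        · rcases hi with rfl | rfl
          · exact absurd ha (by decide)
          · exact absurd ha (by decide)
        · exact hjlow ha
    have hBdadj : ∀ v ∈ Bd, ∀ w ∈ Bd, v ≠ w → G.Adj v w := by
      intro v hv w hw hvw
      by_contra hnadj
      have hvW := (Finset.mem_sdiff.1 hv).1
      have hwW := (Finset.mem_sdiff.1 hw).1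
      have hcov : I ⊆ (I.filter fun x => ¬G.Adj v x ∧ ¬G.Adj w x) ∪
          ((I.filter fun x => G.Adj v x) ∪ (I.filter fun x => G.Adj w x)) := by
        intro x hx
        by_cases h1 : G.Adj v x
        · exact Finset.mem_union_right _ (Finset.mem_union_left _ (Finset.mem_filter.2 ⟨hx, h1⟩))
        · by_cases h2 : G.Adj w x
          · exact Finset.mem_union_right _ (Finset.mem_union_right _ (Finset.mem_filter.2 ⟨hx, h2⟩))
          · exact Finset.mem_union_left _ (Finset.mem_filter.2 ⟨hx, h1, h2⟩)
      have hcb : 0 < (I.filter fun x => ¬G.Adj v x ∧ ¬G.Adj w x).card := by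
        have h1 := Finset.card_le_card hcov
        have h2 := Finset.card_union_le (I.filter fun x => ¬G.Adj v x ∧ ¬G.Adj w x)
          ((I.filter fun x => G.Adj v x) ∪ (I.filter fun x => G.Adj w x))
        have h3 := Finset.card_union_le (I.filter fun x => G.Adj v x)
          (I.filter fun x => G.Adj w x)
        have hqv := (hEtype v hv).2
        have hqw := (hEtype w hw).2
        omega
      obtain ⟨x, hxm⟩ := Finset.card_pos.1 hcb
      obtain ⟨hxI, hxnv, hxnw⟩ := Finset.mem_filter.1 hxm
      exact sixWWI v hvW w hwW x hxI hnadj hxnv hxnw hvw (hEtype v hv).1 (hEtype w hw).1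
    obtain ⟨e, he1, he2, he3⟩ : ∃ e, e ≤ Bd.card / 2 ∧ e ≤ (t + 1) / 2 ∧
        (e = Bd.card / 2 ∨ e = (t + 1) / 2) := by
      rcases le_total (Bd.card / 2) ((t + 1) / 2) with h | h
      · exact ⟨Bd.card / 2, le_refl _, h, Or.inl rfl⟩
      · exact ⟨(t + 1) / 2, h, le_refl _, Or.inr rfl⟩
    obtain ⟨B2, hB2sub, hB2card⟩ := Finset.exists_subset_card_eq
      (show 2 * e ≤ Bd.card by omega)
    have hB2cl : G.IsClique (↑B2 : Set V) := by
      intro x hx y hy hxy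
      exact hBdadj x (hB2sub (Finset.mem_coe.1 hx)) y (hB2sub (Finset.mem_coe.1 hy)) hxy
    obtain ⟨PB, hPBPD, hPBc, hPBm⟩ := clique_pairs G B2.card B2 rfl hB2cl
    have hPBc' : PB.card = e := by rw [hPBc, hB2card]; omega
    have hsT : t - 2 * e ≤ Gd.card ∧ ℓ ≤ e + (t - 2 * e) + (I.card - (t - 2 * e)) / 2 := by
      rcases he3 with h3 | h3 <;> exact ⟨by omega, by omega⟩
    obtain ⟨T, hTsub, hTcard⟩ := Finset.exists_subset_card_eq hsT.1
    refine buildFan G hF u i hIcl PB T t ?_ hPBPD (hTsub.trans hGdW) ?_ ?_ (by omega) ?_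
    · intro p hp
      obtain ⟨h1, h2, h3⟩ := hPBm p hp
      exact ⟨(Finset.mem_sdiff.1 (hB2sub h1)).1, (Finset.mem_sdiff.1 (hB2sub h2)).1, h3⟩
    · intro w hw hwv
      obtain ⟨p, hp, h | h⟩ := mem_verts.1 hwv
      · exact (Finset.mem_sdiff.1 (hB2sub (h ▸ (hPBm p hp).1))).2 (hTsub hw)
      · exact (Finset.mem_sdiff.1 (hB2sub (h ▸ (hPBm p hp).2.1))).2 (hTsub hw)
    · intro w hw
      exact (Finset.mem_filter.1 (hTsub hw)).2
    · rw [hPBc', hTcard]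
      exact hsT.2
  · -- remaining case : ℓ = 6, |I| = 7, t = 5
    push_neg at hk2
    obtain ⟨hl, hk7, ht5'⟩ : ℓ = 6 ∧ I.card = 7 ∧ t = 5 := by omega
    subst hl
    have hedge : ∃ a ∈ W, ∃ b ∈ W, G.Adj a b := by
      by_contra h'
      push_neg at h'
      refine absurd (h6 W ?_) (by omega)
      intro x hx y hy hxy
      exact h' x (Finset.mem_coe.1 hx) y (Finset.mem_coe.1 hy)
    obtain ⟨a, haW, b, hbW, hab⟩ := hedge
    have habne : a ≠ b := G.ne_of_adj hab
    set R := (W.erase a).erase b with hRdef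
    have hbWa : b ∈ W.erase a := Finset.mem_erase.2 ⟨habne.symm, hbW⟩
    have hRcard : R.card + 2 = W.card := by
      rw [hRdef, Finset.card_erase_of_mem hbWa, Finset.card_erase_of_mem haW]
      omega
    have hRW : R ⊆ W := fun x hx => Finset.mem_of_mem_erase (Finset.mem_of_mem_erase hx)
    have hRa : ∀ x ∈ R, x ≠ a ∧ x ≠ b := fun x hx =>
      ⟨Finset.ne_of_mem_erase (Finset.mem_of_mem_erase hx), Finset.ne_of_mem_erase hx⟩
    have hE2 : ∀ v ∈ W, (I.filter (fun x => G.Adj v x)).card ≤ 2 →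
        ∀ a' : Fin 5, a'.val ≤ 2 → ¬ G.Adj v (u a') := by
      intro v hvW hq2
      obtain ⟨j, hji, hjadj, hjuniq⟩ := X2_second G hvW
      by_cases hjlow : j.val ≤ 2
      · exact absurd (lowStep v hvW j hjadj hjuniq hji hjlow) (by omega)
      · intro a' ha' hadj
        rcases hjuniq a' hadj with rfl | rfl
        · rcases hi with rfl | rfl
          · exact absurd ha' (by decide)
          · exact absurd ha' (by decide)
        · exact hjlow ha'
    set Q2 := R.filter (fun v => (I.filter (fun x => G.Adj v x)).card ≤ 2) with hQ2def
    by_cases hQ2 : Q2.card ≤ 1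
    · set R3 := R.filter (fun v => ¬((I.filter (fun x => G.Adj v x)).card ≤ 2)) with hR3def
      have hsplit : Q2.card + R3.card = R.card :=
        Finset.card_filter_add_card_filter_not _
      obtain ⟨T, hTsub, hTcard⟩ := Finset.exists_subset_card_eq (show 3 ≤ R3.card by omega)
      refine buildFan G hF u i hIcl {(a, b)} T 3 ?_
        (pd_singleton _ habne) ((hTsub.trans (Finset.filter_subset _ _)).trans hRW) ?_ ?_
        (by omega) ?_
      · intro p hp
        rw [Finset.mem_singleton] at hp
        subst hp
        exact ⟨haW, hbW, hab⟩
      · intro w hw hwv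
        rw [verts_singleton] at hwv
        have hwR : w ∈ R := Finset.filter_subset _ _ (hTsub hw)
        rcases Finset.mem_insert.1 hwv with h | h
        · exact (hRa w hwR).1 h
        · rw [Finset.mem_singleton] at h
          exact (hRa w hwR).2 h
      · intro w hw
        have h' := (Finset.mem_filter.1 (hTsub hw)).2
        exact (show 3 ≤ (I.filter (fun x => G.Adj w x)).card by omega)
      · show (6:ℕ) ≤ ({(a, b)} : Finset (V × V)).card + T.card + (I.card - T.card) / 2
        rw [Finset.card_singleton, hTcard]
        omega
    · push_neg at hQ2
      obtain ⟨e1, he1m, e2, he2m, hee⟩ := Finset.one_lt_card.1 hQ2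
      obtain ⟨he1R, hq1⟩ := Finset.mem_filter.1 he1m
      obtain ⟨he2R, hq2'⟩ := Finset.mem_filter.1 he2m
      by_cases heAdj : G.Adj e1 e2
      · set R2 := (R.erase e1).erase e2 with hR2def
        have he2R1 : e2 ∈ R.erase e1 := Finset.mem_erase.2 ⟨hee.symm, he2R⟩
        have hR2card : R2.card + 2 = R.card := by
          rw [hR2def, Finset.card_erase_of_mem he2R1, Finset.card_erase_of_mem he1R]
          omega
        have hR2sub : R2 ⊆ R := fun x hx =>
          Finset.mem_of_mem_erase (Finset.mem_of_mem_erase hx)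
        have hR2ne : ∀ x ∈ R2, x ≠ e1 ∧ x ≠ e2 := fun x hx =>
          ⟨Finset.ne_of_mem_erase (Finset.mem_of_mem_erase hx), Finset.ne_of_mem_erase hx⟩
        have hdouble : ({(a, b), (e1, e2)} : Finset (V × V)) = {(a, b)} ∪ {(e1, e2)} :=
          Finset.insert_eq _ _
        have hdvd : Disjoint (verts {(a, b)}) (verts ({(e1, e2)} : Finset (V × V))) := by
          rw [verts_singleton, verts_singleton, Finset.disjoint_left]
          intro x hx hy
          simp only [Finset.mem_insert, Finset.mem_singleton] at hx hy
          rcases hx with rfl | rfl <;> rcases hy with rfl | rfl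
          · exact (hRa x he1R).1 rfl
          · exact (hRa x he2R).1 rfl
          · exact (hRa x he1R).2 rfl
          · exact (hRa x he2R).2 rfl
        have hPD2 : PD ({(a, b), (e1, e2)} : Finset (V × V)) := by
          rw [hdouble]
          exact pd_union (pd_singleton _ habne) (pd_singleton _ (G.ne_of_adj heAdj)) hdvd
        have hcard2 : ({(a, b), (e1, e2)} : Finset (V × V)).card = 2 := by
          rw [hdouble, card_union_of_vdisj hdvd, Finset.card_singleton, Finset.card_singleton]
        by_cases hw1 : ∃ w ∈ R2, 1 ≤ (I.filter (fun x => G.Adj w x)).card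
        · obtain ⟨w, hwR2, hwq⟩ := hw1
          refine buildFan G hF u i hIcl {(a, b), (e1, e2)} {w} 1 ?_ hPD2 ?_ ?_ ?_
            (by simp) ?_
          · intro p hp
            rcases Finset.mem_insert.1 hp with rfl | hp'
            · exact ⟨haW, hbW, hab⟩
            · rw [Finset.mem_singleton] at hp'
              subst hp'
              exact ⟨hRW he1R, hRW he2R, heAdj⟩
          · intro x hx
            rw [Finset.mem_singleton] at hx
            subst hx
            exact hRW (hR2sub hwR2)
          · intro x hx hxv
            rw [Finset.mem_singleton] at hx
            subst hx
            rw [hdouble, verts_union, verts_singleton, verts_singleton] at hxv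
            simp only [Finset.mem_union, Finset.mem_insert, Finset.mem_singleton] at hxv
            rcases hxv with (rfl | rfl) | (rfl | rfl)
            · exact (hRa x (hR2sub hwR2)).1 rfl
            · exact (hRa x (hR2sub hwR2)).2 rfl
            · exact (hR2ne x hwR2).1 rfl
            · exact (hR2ne x hwR2).2 rfl
          · intro x hx
            rw [Finset.mem_singleton] at hx
            subst hx
            exact hwq
          · show (6:ℕ) ≤ ({(a, b), (e1, e2)} : Finset (V × V)).card + ({w} : Finset V).card +
              (I.card - ({w} : Finset V).card) / 2
            rw [hcard2, Finset.card_singleton]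
            omega
        · push_neg at hw1
          have hq0 : ∀ w ∈ R2, ∀ x ∈ I, ¬ G.Adj w x := by
            intro w hw x hx hadj
            have h1 := hw1 w hw
            have h2 : x ∈ I.filter (fun y => G.Adj w y) := Finset.mem_filter.2 ⟨hx, hadj⟩
            have := Finset.card_pos.2 ⟨x, h2⟩
            omega
          obtain ⟨w1, hw1m, w2, hw2m, hww⟩ := Finset.one_lt_card.1
            (show 1 < R2.card by omega)
          by_cases hwadj : G.Adj w1 w2
          · -- three disjoint edges
            have htriple : ({(a, b), (e1, e2), (w1, w2)} : Finset (V × V)) =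
                {(a, b)} ∪ ({(e1, e2)} ∪ {(w1, w2)}) := by
              rw [Finset.insert_eq, Finset.insert_eq]
            have hvd23 : Disjoint (verts ({(e1, e2)} : Finset (V × V)))
                (verts ({(w1, w2)} : Finset (V × V))) := by
              rw [verts_singleton, verts_singleton, Finset.disjoint_left]
              intro x hx hy
              simp only [Finset.mem_insert, Finset.mem_singleton] at hx hy
              rcases hx with rfl | rfl <;> rcases hy with rfl | rfl
              · exact (hR2ne x hw1m).1 rfl
              · exact (hR2ne x hw2m).1 rfl
              · exact (hR2ne x hw1m).2 rfl
              · exact (hR2ne x hw2m).2 rfl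
            have hvd123 : Disjoint (verts ({(a, b)} : Finset (V × V)))
                (verts ({(e1, e2)} ∪ {(w1, w2)} : Finset (V × V))) := by
              rw [verts_union, Finset.disjoint_union_right]
              constructor
              · exact hdvd
              · rw [verts_singleton, verts_singleton, Finset.disjoint_left]
                intro x hx hy
                simp only [Finset.mem_insert, Finset.mem_singleton] at hx hy
                rcases hx with rfl | rfl <;> rcases hy with rfl | rfl
                · exact (hRa x (hR2sub hw1m)).1 rfl
                · exact (hRa x (hR2sub hw2m)).1 rfl
                · exact (hRa x (hR2sub hw1m)).2 rfl
                · exact (hRa x (hR2sub hw2m)).2 rfl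
            have hPD3 : PD ({(a, b), (e1, e2), (w1, w2)} : Finset (V × V)) := by
              rw [htriple]
              exact pd_union (pd_singleton _ habne)
                (pd_union (pd_singleton _ (G.ne_of_adj heAdj))
                  (pd_singleton _ (G.ne_of_adj hwadj)) hvd23) hvd123
            have hcard3 : ({(a, b), (e1, e2), (w1, w2)} : Finset (V × V)).card = 3 := by
              rw [htriple, card_union_of_vdisj hvd123, card_union_of_vdisj hvd23]
              simp
            refine buildFan G hF u i hIcl {(a, b), (e1, e2), (w1, w2)} ∅ 0 ?_ hPD3
              (by simp) (by simp) (by simp) (by simp) ?_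
            · intro p hp
              rcases Finset.mem_insert.1 hp with rfl | hp'
              · exact ⟨haW, hbW, hab⟩
              · rcases Finset.mem_insert.1 hp' with rfl | hp''
                · exact ⟨hRW he1R, hRW he2R, heAdj⟩
                · rw [Finset.mem_singleton] at hp''
                  subst hp''
                  exact ⟨hRW (hR2sub hw1m), hRW (hR2sub hw2m), hwadj⟩
            · show (6:ℕ) ≤ ({(a, b), (e1, e2), (w1, w2)} : Finset (V × V)).card +
                (∅ : Finset V).card + (I.card - (∅ : Finset V).card) / 2
              rw [hcard3]
              omega
          · obtain ⟨x, hxI⟩ := Finset.card_pos.1 (show 0 < I.card by omega)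
            exact sixWWI w1 (hRW (hR2sub hw1m)) w2 (hRW (hR2sub hw2m)) x hxI hwadj
              (hq0 w1 hw1m x hxI) (hq0 w2 hw2m x hxI) hww
              (hE2 w1 (hRW (hR2sub hw1m)) (by have := hw1 w1 hw1m; omega))
              (hE2 w2 (hRW (hR2sub hw2m)) (by have := hw1 w2 hw2m; omega))
      · -- e1, e2 not adjacent : common non-neighbour gives a 6-independent set
        have hcov : I ⊆ (I.filter fun x => ¬G.Adj e1 x ∧ ¬G.Adj e2 x) ∪
            ((I.filter fun x => G.Adj e1 x) ∪ (I.filter fun x => G.Adj e2 x)) := by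
          intro x hx
          by_cases h1 : G.Adj e1 x
          · exact Finset.mem_union_right _ (Finset.mem_union_left _ (Finset.mem_filter.2 ⟨hx, h1⟩))
          · by_cases h2 : G.Adj e2 x
            · exact Finset.mem_union_right _
                (Finset.mem_union_right _ (Finset.mem_filter.2 ⟨hx, h2⟩))
            · exact Finset.mem_union_left _ (Finset.mem_filter.2 ⟨hx, h1, h2⟩)
        have hcb : 0 < (I.filter fun x => ¬G.Adj e1 x ∧ ¬G.Adj e2 x).card := by
          have h1 := Finset.card_le_card hcov
          have h2 := Finset.card_union_le (I.filter fun x => ¬G.Adj e1 x ∧ ¬G.Adj e2 x)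
            ((I.filter fun x => G.Adj e1 x) ∪ (I.filter fun x => G.Adj e2 x))
          have h3 := Finset.card_union_le (I.filter fun x => G.Adj e1 x)
            (I.filter fun x => G.Adj e2 x)
          omega
        obtain ⟨x, hxm⟩ := Finset.card_pos.1 hcb
        obtain ⟨hxI, hxn1, hxn2⟩ := Finset.mem_filter.1 hxm
        exact sixWWI e1 (hRW he1R) e2 (hRW he2R) x hxI heAdj hxn1 hxn2 hee
          (hE2 e1 (hRW he1R) hq1) (hE2 e2 (hRW he2R) hq2')
end
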